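/- arXiv:2104.08944 — 7 statements merged into one kernel-verified Lean document; each statement's English description precedes it below -/
import Mathlib

section
/- Let α = log 2 / log 3 and suppose α is ρ-diophantine for some ρ > 0, i.e. there is c > 0 with ‖nα‖ ≥ c n^{-ρ} for every positive integer n. Let s_1 = 1 < s_2 < ⋯ enumerate the Furstenberg set S in increasing order. Then there are positive constants c', C' such that for all sufficiently large n: c'/(log s_n)^ρ ≤ (s_{n+1} − s_n)/s_n ≤ C'/(log s_n)^{1/(ρ+1)}. -/
open Real Filter Asymptotics

/-!
For `S = {a ^ j * b ^ k}` and `α = log a / log b`, the base-`b` logarithm of `a ^ j * b ^ k` is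
`j α + k`.

Lower bound: if `N < M` are neighbours in `S`, then `M ≤ a N < b N`, so their exponents of `a`
differ by some `d ≠ 0` with `|d| ≤ log M / log a`, and
`log (M / N) = log b · |d α + e| ≥ c log b / |d| ^ ρ`.

Upper bound: Dirichlet gives `q ≤ Q` with `θ = q α - p` at most `1 / Q` in size, and at least
`c / Q ^ ρ` by hypothesis. The points `K + m θ = m q α + (K - m p)`, `0 ≤ m ≤ 1 / |θ| + 1`, sweep a
whole unit interval with mesh `|θ|`, and `K - m p ≥ 0` once `log_b N ≥ (Q ^ ρ / c + 1) Q`. So `S`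
meets `(N, N b ^ (1 / Q)]`, and `Q ≍ (log N) ^ (1 / (ρ + 1))` is the best admissible choice.
-/

def DiophantineWith (ρ c α : ℝ) : Prop :=
  ∀ q : ℕ, 0 < q → ∀ p : ℤ, c / (q : ℝ) ^ ρ ≤ |q * α - p|

namespace DiophantineWith

variable {ρ c α : ℝ}

theorem le_half (h : DiophantineWith ρ c α) : c ≤ 1 / 2 := by
  have h1 := h 1 one_pos (round α)
  simp only [Nat.cast_one, one_rpow, div_one, one_mul] at h1
  exact h1.trans (abs_sub_round α)

theorem div_abs_rpow_le (h : DiophantineWith ρ c α) {d : ℤ} (hd : d ≠ 0) (e : ℤ) :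
    c / |(d : ℝ)| ^ ρ ≤ |d * α + e| := by
  obtain ⟨q, rfl | rfl⟩ := Int.eq_nat_or_neg d
  · have hq : 0 < q := by omega
    simpa [sub_eq_add_neg] using h q hq (-e)
  · have hq : 0 < q := by omega
    have h' := h q hq e
    rw [← abs_neg, neg_sub] at h'
    simpa [neg_mul, ← sub_eq_neg_add] using h'

end DiophantineWith

theorem exists_int_add_nat_mul_mem_Ioc {θ : ℝ} (hθ : θ ≠ 0) (t : ℝ) :
    ∃ K : ℤ, ∃ m : ℕ, (m : ℝ) ≤ 1 / |θ| + 1 ∧ K + m * θ ∈ Set.Ioc t (t + |θ|) := by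
  rcases hθ.lt_or_gt with hneg | hpos
  · obtain ⟨φ, hφ, rfl⟩ : ∃ φ, 0 < φ ∧ θ = -φ := ⟨-θ, neg_pos.2 hneg, (neg_neg θ).symm⟩
    set x := ⌈t + φ⌉ - (t + φ) with hx
    have hx0 : 0 ≤ x := by rw [hx, sub_nonneg]; exact Int.le_ceil _
    have hx1 : x < 1 := by linarith [Int.ceil_lt_add_one (t + φ)]
    have hxφ : 0 ≤ x / φ := div_nonneg hx0 hφ.le
    have hm := Nat.ceil_lt_add_one hxφ
    rw [abs_neg, abs_of_pos hφ]
    refine ⟨⌈t + φ⌉, ⌈x / φ⌉₊, ?_, ?_, ?_⟩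
    · linarith [div_le_div_of_nonneg_right hx1.le hφ.le]
    · have h1 : (⌈x / φ⌉₊ : ℝ) - 1 < x / φ := by linarith
      have := (lt_div_iff₀ hφ).1 h1
      linarith
    · have := (div_le_iff₀ hφ).1 (Nat.le_ceil (x / φ))
      linarith
  · set x := Int.fract t
    have hxθ : 0 ≤ x / θ := div_nonneg (Int.fract_nonneg t) hpos.le
    refine ⟨⌊t⌋, ⌊x / θ⌋₊ + 1, ?_, ?_, ?_⟩
    · rw [abs_of_pos hpos]
      have : x / θ ≤ 1 / θ := div_le_div_of_nonneg_right (Int.fract_lt_one t).le hpos.le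
      push_cast
      linarith [Nat.floor_le hxθ]
    · have := (div_lt_iff₀ hpos).1 (Nat.lt_floor_add_one (x / θ))
      push_cast
      linarith [Int.floor_add_fract t]
    · have := (le_div_iff₀ hpos).1 (Nat.floor_le hxθ)
      rw [abs_of_pos hpos]
      push_cast
      linarith [Int.floor_add_fract t]

theorem exists_nat_mul_add_mem_Ioc {α t : ℝ} (hα : α ≤ 1) {q : ℕ} {p : ℤ} (hθ : q * α - p ≠ 0)
    (ht : (1 / |q * α - p| + 1) * q ≤ t) :
    ∃ j k : ℕ, (j : ℝ) * α + k ∈ Set.Ioc t (t + |q * α - p|) := by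
  obtain ⟨K, m, hm, hmem⟩ := exists_int_add_nat_mul_mem_Ioc hθ t
  have hj : ((m * q : ℕ) : ℝ) * α ≤ t := calc
    ((m * q : ℕ) : ℝ) * α ≤ (m * q : ℕ) := mul_le_of_le_one_right (Nat.cast_nonneg _) hα
    _ ≤ t := by
      push_cast
      exact (mul_le_mul_of_nonneg_right hm (Nat.cast_nonneg q)).trans ht
  have hval : ((m * q : ℕ) : ℝ) * α + ((K - m * p : ℤ) : ℝ) = K + m * (q * α - p) := by
    push_cast; ring
  have hk : 0 ≤ K - m * p := by
    have : ((-1 : ℤ) : ℝ) < ((K - m * p : ℤ) : ℝ) := by push_cast at hj hval ⊢; linarith [hmem.1]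
    exact Int.lt_iff_add_one_le.1 (by exact_mod_cast this)
  refine ⟨m * q, (K - m * p).toNat, ?_⟩
  rwa [show (((K - m * p).toNat : ℕ) : ℝ) = ((K - m * p : ℤ) : ℝ) by
    exact_mod_cast Int.toNat_of_nonneg hk, hval]

theorem log_sub_log_le_sub_div {x y : ℝ} (hx : 0 < x) (hy : 0 < y) :
    log y - log x ≤ (y - x) / x := by
  rw [← log_div hy.ne' hx.ne', sub_div, div_self hx.ne']
  exact log_le_sub_one_of_pos (div_pos hy hx)

theorem exists_nat_rpow_div_add_one_mul_le {ρ c t : ℝ} (hρ : 0 ≤ ρ) (hc : 0 < c) (hc1 : c ≤ 1)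
    (ht : 2 / c ≤ t) :
    ∃ Q : ℕ, 0 < Q ∧ ((Q : ℝ) ^ ρ / c + 1) * Q ≤ t ∧ (c * t / 2) ^ (1 / (ρ + 1)) ≤ 2 * Q := by
  set y := (c * t / 2) ^ (1 / (ρ + 1))
  have hct : 1 ≤ c * t / 2 := by rw [div_le_iff₀ hc] at ht; linarith
  have hy : 1 ≤ y := one_le_rpow hct (by positivity)
  have hyρ : y ^ (ρ + 1) = c * t / 2 := by
    rw [← rpow_mul (by linarith), one_div_mul_cancel (by linarith), rpow_one]
  have hQ1 : (1 : ℝ) ≤ ⌊y⌋₊ := by exact_mod_cast Nat.floor_pos.2 hy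
  refine ⟨⌊y⌋₊, Nat.floor_pos.2 hy, ?_, by linarith [Nat.lt_floor_add_one y]⟩
  have hQρ : 1 ≤ (⌊y⌋₊ : ℝ) ^ ρ / c := by
    rw [le_div_iff₀ hc, one_mul]; exact hc1.trans (one_le_rpow hQ1 hρ)
  calc ((⌊y⌋₊ : ℝ) ^ ρ / c + 1) * ⌊y⌋₊ ≤ ((⌊y⌋₊ : ℝ) ^ ρ / c + (⌊y⌋₊ : ℝ) ^ ρ / c) * ⌊y⌋₊ := by
        gcongr
    _ = 2 * ((⌊y⌋₊ : ℝ) ^ ρ * ⌊y⌋₊) / c := by ring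
    _ ≤ 2 * y ^ (ρ + 1) / c := by
        rw [← rpow_add_one (by positivity)]
        gcongr
        exact Nat.floor_le (by linarith)
    _ = t := by rw [hyρ]; field_simp

def IsPowMulPow (a b m : ℕ) : Prop := ∃ j k : ℕ, m = a ^ j * b ^ k

namespace IsPowMulPow

variable {a b N M : ℕ} {ρ c : ℝ}

theorem infinite (ha : 1 < a) : (Set.ofPred (IsPowMulPow a b)).Infinite :=
  Set.infinite_of_injective_forall_mem (Nat.pow_right_injective ha) fun j => ⟨j, 0, by simp⟩

theorem mul_left (h : IsPowMulPow a b N) : IsPowMulPow a b (a * N) := by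
  obtain ⟨j, k, rfl⟩ := h
  exact ⟨j + 1, k, by ring⟩

theorem pos (ha : 0 < a) (hb : 0 < b) (h : IsPowMulPow a b N) : 0 < N := by
  obtain ⟨j, k, rfl⟩ := h
  positivity

theorem log_pow_mul_pow (ha : 0 < a) (hb : 0 < b) (j k : ℕ) :
    log ((a ^ j * b ^ k : ℕ) : ℝ) = j * log a + k * log b := by
  push_cast
  rw [log_mul (by positivity) (by positivity), log_pow, log_pow]

theorem log_pow_mul_pow_div_log (ha : 0 < a) (hb : 1 < b) (j k : ℕ) :
    log ((a ^ j * b ^ k : ℕ) : ℝ) / log b = j * (log a / log b) + k := by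
  have : log (b : ℝ) ≠ 0 := (log_pos (by exact_mod_cast hb)).ne'
  rw [log_pow_mul_pow ha (by omega)]
  field_simp

theorem le_log_div_log (ha : 1 < a) (hb : 0 < b) (j k : ℕ) :
    (j : ℝ) ≤ log ((a ^ j * b ^ k : ℕ) : ℝ) / log a := by
  have hla : 0 < log (a : ℝ) := log_pos (by exact_mod_cast ha)
  rw [le_div_iff₀ hla, log_pow_mul_pow (by omega) hb]
  have : 0 ≤ (k : ℝ) * log b := mul_nonneg (Nat.cast_nonneg k) (log_natCast_nonneg b)
  linarith

theorem exponent_ne_of_lt_of_le_mul (ha : 0 < a) (hab : a < b) {j k j' k' : ℕ}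
    (hlt : a ^ j * b ^ k < a ^ j' * b ^ k') (hle : a ^ j' * b ^ k' ≤ a * (a ^ j * b ^ k)) :
    j ≠ j' := by
  rintro rfl
  have hk : k < k' := (Nat.pow_lt_pow_iff_right (by omega)).1 (Nat.lt_of_mul_lt_mul_left hlt)
  refine lt_irrefl (a * (a ^ j * b ^ k)) ?_
  calc a * (a ^ j * b ^ k) < b * (a ^ j * b ^ k) :=
        Nat.mul_lt_mul_of_pos_right hab (Nat.mul_pos (pow_pos ha j) (pow_pos (by omega) k))
    _ = a ^ j * b ^ (k + 1) := by ring
    _ ≤ a ^ j * b ^ k' := Nat.mul_le_mul_left _ (Nat.pow_le_pow_right (by omega) hk)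
    _ ≤ a * (a ^ j * b ^ k) := hle

theorem mul_log_div_rpow_le_log_sub_log (ha : 1 < a) (hab : a < b) (hρ : 0 ≤ ρ) (hc : 0 ≤ c)
    (hα : DiophantineWith ρ c (log a / log b)) (hN : IsPowMulPow a b N)
    (hM : IsPowMulPow a b M) (hNM : N < M) (hMN : M ≤ a * N) :
    c * log b * (log a / log M) ^ ρ ≤ log M - log N := by
  have ha0 : 0 < a := by omega
  have hb : 1 < b := ha.trans hab
  have hb0 : 0 < b := by omega
  have hlb : 0 < log (b : ℝ) := log_pos (by exact_mod_cast hb)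
  have hlog : log (N : ℝ) < log M :=
    log_lt_log (by exact_mod_cast hN.pos ha0 hb0) (by exact_mod_cast hNM)
  obtain ⟨j, k, rfl⟩ := hN
  obtain ⟨j', k', rfl⟩ := hM
  have hd : (j' : ℤ) - j ≠ 0 := sub_ne_zero.2 (Nat.cast_injective.ne
    (exponent_ne_of_lt_of_le_mul ha0 hab hNM hMN).symm)
  set d : ℤ := j' - j
  set x : ℝ := d * (log a / log b) + (((k' : ℤ) - k : ℤ) : ℝ)
  have hgap : log ((a ^ j' * b ^ k' : ℕ) : ℝ) - log ((a ^ j * b ^ k : ℕ) : ℝ) = log b * x := by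
    have hN := log_pow_mul_pow_div_log ha0 hb j k
    have hM := log_pow_mul_pow_div_log ha0 hb j' k'
    rw [div_eq_iff hlb.ne'] at hN hM
    rw [hN, hM]
    push_cast [d, x]
    ring
  have hx : 0 < x := (mul_pos_iff_of_pos_left hlb).1 (hgap ▸ sub_pos.2 hlog)
  set L := log ((a ^ j' * b ^ k' : ℕ) : ℝ) / log a
  have hla : 0 < log (a : ℝ) := log_pos (by exact_mod_cast ha)
  have hdL : |(d : ℝ)| ≤ L := by
    push_cast [d]
    refine abs_sub_le_of_nonneg_of_le (Nat.cast_nonneg _) (le_log_div_log ha hb0 j' k')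
      (Nat.cast_nonneg _) ((le_log_div_log ha hb0 j k).trans ?_)
    exact div_le_div_of_nonneg_right hlog.le hla.le
  calc c * log b * (log a / log ((a ^ j' * b ^ k' : ℕ) : ℝ)) ^ ρ = log b * (c / L ^ ρ) := by
        rw [← inv_div, inv_rpow ((abs_nonneg _).trans hdL)]
        ring
    _ ≤ log b * (c / |(d : ℝ)| ^ ρ) := by
        gcongr
    _ ≤ log b * |x| := mul_le_mul_of_nonneg_left (hα.div_abs_rpow_le hd _) hlb.le
    _ = _ := by rw [abs_of_pos hx, hgap]

theorem exists_lt_le_mul_rpow_abs (ha : 0 < a) (hab : a ≤ b) (hb : 1 < b) (hN : 0 < N) {q : ℕ}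
    {p : ℤ} (hθ : q * (log a / log b) - p ≠ 0)
    (ht : (1 / |q * (log a / log b) - p| + 1) * q ≤ log N / log b) :
    ∃ E, IsPowMulPow a b E ∧ N < E ∧ (E : ℝ) ≤ N * (b : ℝ) ^ |q * (log a / log b) - p| := by
  have hlb : 0 < log (b : ℝ) := log_pos (by exact_mod_cast hb)
  have hN' : (0 : ℝ) < N := by exact_mod_cast hN
  have hα : log a / log b ≤ 1 :=
    div_le_one_of_le₀ (log_le_log (by exact_mod_cast ha) (by exact_mod_cast hab)) hlb.le
  obtain ⟨j, k, hlo, hhi⟩ := exists_nat_mul_add_mem_Ioc hα hθ ht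
  rw [← log_pow_mul_pow_div_log ha hb] at hlo hhi
  have hE : (0 : ℝ) < (a ^ j * b ^ k : ℕ) := by
    exact_mod_cast Nat.mul_pos (pow_pos ha j) (pow_pos (by omega) k)
  refine ⟨a ^ j * b ^ k, ⟨j, k, rfl⟩, ?_, ?_⟩
  · exact_mod_cast (log_lt_log_iff hN' hE).1 ((div_lt_div_iff_of_pos_right hlb).1 hlo)
  · rw [← log_le_log_iff hE (by positivity), log_mul hN'.ne' (by positivity),
      log_rpow (by positivity)]
    rw [div_le_iff₀ hlb, add_mul, div_mul_cancel₀ _ hlb.ne'] at hhi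
    exact hhi

theorem sub_div_le_of_rpow_div_add_one_mul_le (ha : 0 < a) (hab : a ≤ b) (hb : 1 < b)
    (hρ : 0 ≤ ρ) (hc : 0 < c) (hα : DiophantineWith ρ c (log a / log b)) (hN : 0 < N)
    (hM : ∀ E, IsPowMulPow a b E → N < E → M ≤ E) {Q : ℕ} (hQ : 0 < Q)
    (ht : ((Q : ℝ) ^ ρ / c + 1) * Q ≤ log N / log b) :
    ((M : ℝ) - N) / N ≤ (b - 1) / Q := by
  obtain ⟨q, hq, hqQ, hθ⟩ := Real.exists_nat_abs_mul_sub_round_le (log a / log b) hQ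
  set θ := q * (log a / log b) - round (q * (log a / log b))
  have hQ' : (0 : ℝ) < Q := by exact_mod_cast hQ
  have hθlow : c / (q : ℝ) ^ ρ ≤ |θ| := hα q hq _
  have hθpos : 0 < |θ| := lt_of_lt_of_le (by positivity) hθlow
  have hθQ : |θ| ≤ 1 / Q := hθ.trans (one_div_le_one_div_of_le hQ' (by linarith))
  have hinv : 1 / |θ| ≤ (Q : ℝ) ^ ρ / c := by
    rw [div_le_div_iff₀ hθpos hc, one_mul, mul_comm]
    calc c ≤ |θ| * (q : ℝ) ^ ρ := (div_le_iff₀ (by positivity)).1 hθlow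
      _ ≤ |θ| * (Q : ℝ) ^ ρ := by gcongr
  obtain ⟨E, hE, hNE, hEle⟩ := exists_lt_le_mul_rpow_abs ha hab hb hN (abs_pos.1 hθpos)
    (le_trans (by gcongr) ht)
  have hb' : (1 : ℝ) ≤ b := by exact_mod_cast hb.le
  calc ((M : ℝ) - N) / N ≤ (N * (b : ℝ) ^ (1 / (Q : ℝ)) - N) / N := by
        gcongr
        calc (M : ℝ) ≤ E := by exact_mod_cast hM E hE hNE
          _ ≤ N * (b : ℝ) ^ |θ| := hEle
          _ ≤ N * (b : ℝ) ^ (1 / (Q : ℝ)) := by gcongr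
    _ = (1 + ((b : ℝ) - 1)) ^ (1 / (Q : ℝ)) - 1 := by field_simp; ring_nf
    _ ≤ (b - 1) / Q := by
        have := rpow_one_add_le_one_add_mul_self (by linarith : (-1 : ℝ) ≤ b - 1)
          (by positivity : (0 : ℝ) ≤ 1 / Q) ((div_le_one hQ').2 (by exact_mod_cast hQ))
        linarith [show 1 / (Q : ℝ) * (b - 1) = (b - 1) / Q by ring]

theorem div_log_rpow_le_sub_div (ha : 1 < a) (hab : a < b) (hρ : 0 ≤ ρ) (hc : 0 ≤ c)
    (hα : DiophantineWith ρ c (log a / log b)) (hN : IsPowMulPow a b N) (hM : IsPowMulPow a b M)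
    (hNM : N < M) (hsucc : ∀ E, IsPowMulPow a b E → N < E → M ≤ E) (haN : log a ≤ log N) :
    c * log b * (log a / 2) ^ ρ / log N ^ ρ ≤ ((M : ℝ) - N) / N := by
  have hN0 : 0 < N := hN.pos (by omega) (by omega)
  have hN0' : (0 : ℝ) < N := by exact_mod_cast hN0
  have hMN : M ≤ a * N := hsucc _ hN.mul_left (lt_mul_left hN0 ha)
  have hlNM : log (N : ℝ) < log M := log_lt_log hN0' (by exact_mod_cast hNM)
  have hlM : log (M : ℝ) ≤ 2 * log N := by
    calc log (M : ℝ) ≤ log ((a : ℝ) * N) :=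
          log_le_log (by exact_mod_cast hN0.trans hNM) (by exact_mod_cast hMN)
      _ = log a + log N := log_mul (by positivity) hN0'.ne'
      _ ≤ 2 * log N := by linarith
  calc c * log b * (log a / 2) ^ ρ / log N ^ ρ = c * log b * (log a / (2 * log N)) ^ ρ := by
        rw [mul_div_assoc, ← div_rpow (by positivity) (by linarith), div_div]
    _ ≤ c * log b * (log a / log M) ^ ρ := by
        have : 0 ≤ log (b : ℝ) := log_natCast_nonneg b
        gcongr
        linarith
    _ ≤ log M - log N := mul_log_div_rpow_le_log_sub_log ha hab hρ hc hα hN hM hNM hMN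
    _ ≤ ((M : ℝ) - N) / N := log_sub_log_le_sub_div hN0' (by exact_mod_cast hN0.trans hNM)

theorem sub_div_le_div_log_rpow (ha : 0 < a) (hab : a ≤ b) (hb : 1 < b) (hρ : 0 ≤ ρ) (hc : 0 < c)
    (hα : DiophantineWith ρ c (log a / log b)) (hN : 0 < N)
    (hsucc : ∀ E, IsPowMulPow a b E → N < E → M ≤ E) (hlog : 2 * log b / c ≤ log N) :
    ((M : ℝ) - N) / N ≤
      2 * (b - 1) / (c / (2 * log b)) ^ (1 / (ρ + 1)) / log N ^ (1 / (ρ + 1)) := by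
  have hlb : 0 < log (b : ℝ) := log_pos (by exact_mod_cast hb)
  have hlN : 0 < log (N : ℝ) := lt_of_lt_of_le (div_pos (mul_pos two_pos hlb) hc) hlog
  have ht : 2 / c ≤ log N / log b := by
    rwa [le_div_iff₀ hlb, div_mul_eq_mul_div]
  obtain ⟨Q, hQ, hQt, hyQ⟩ :=
    exists_nat_rpow_div_add_one_mul_le hρ hc (hα.le_half.trans (by norm_num)) ht
  have hy : (c * (log N / log b) / 2) ^ (1 / (ρ + 1)) =
      (c / (2 * log b)) ^ (1 / (ρ + 1)) * log N ^ (1 / (ρ + 1)) := by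
    rw [← mul_rpow (by positivity) hlN.le]
    ring_nf
  have hb' : (0 : ℝ) ≤ b - 1 := by
    have : (1 : ℝ) < b := by exact_mod_cast hb
    linarith
  calc ((M : ℝ) - N) / N ≤ (b - 1) / Q :=
        sub_div_le_of_rpow_div_add_one_mul_le ha hab hb hρ hc hα hN hsucc hQ hQt
    _ ≤ (b - 1) / ((c * (log N / log b) / 2) ^ (1 / (ρ + 1)) / 2) := by
        gcongr
        linarith
    _ = 2 * (b - 1) / (c / (2 * log b)) ^ (1 / (ρ + 1)) / log N ^ (1 / (ρ + 1)) := by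
        rw [hy]
        field_simp

theorem nth_gap_bounds (ha : 1 < a) (hab : a < b) (hρ : 0 ≤ ρ) (hc : 0 < c)
    (hα : DiophantineWith ρ c (log a / log b)) :
    ∃ c' > (0 : ℝ), ∃ C' > (0 : ℝ), ∀ᶠ n : ℕ in atTop,
      c' / log (Nat.nth (IsPowMulPow a b) n) ^ ρ ≤
          ((Nat.nth (IsPowMulPow a b) (n + 1) : ℝ) - Nat.nth (IsPowMulPow a b) n) /
            Nat.nth (IsPowMulPow a b) n ∧
        ((Nat.nth (IsPowMulPow a b) (n + 1) : ℝ) - Nat.nth (IsPowMulPow a b) n) /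
            Nat.nth (IsPowMulPow a b) n ≤
          C' / log (Nat.nth (IsPowMulPow a b) n) ^ (1 / (ρ + 1)) := by
  have hinf := infinite (b := b) ha
  have hsucc (n E : ℕ) (hE : IsPowMulPow a b E) (hlt : Nat.nth (IsPowMulPow a b) n < E) :
      Nat.nth (IsPowMulPow a b) (n + 1) ≤ E :=
    not_lt.1 fun h => (Nat.le_nth_of_lt_nth_succ h hE).not_gt hlt
  have hlog : Tendsto (fun n => log (Nat.nth (IsPowMulPow a b) n : ℝ)) atTop atTop :=
    tendsto_log_atTop.comp
      (tendsto_natCast_atTop_atTop.comp (Nat.nth_strictMono hinf).tendsto_atTop)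
  have hla : 0 < log (a : ℝ) := log_pos (by exact_mod_cast ha)
  have hlb : 0 < log (b : ℝ) := log_pos (by exact_mod_cast ha.trans hab)
  have hb : (1 : ℝ) < b := by exact_mod_cast ha.trans hab
  refine ⟨c * log b * (log a / 2) ^ ρ, by positivity,
    2 * (b - 1) / (c / (2 * log b)) ^ (1 / (ρ + 1)), by have := sub_pos.2 hb; positivity, ?_⟩
  filter_upwards [hlog.eventually_ge_atTop (max (log a) (2 * log b / c))] with n hn
  have hmem := Nat.nth_mem_of_infinite hinf
  exact ⟨div_log_rpow_le_sub_div ha hab hρ hc.le hα (hmem n) (hmem (n + 1))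
      (Nat.nth_lt_nth hinf |>.2 n.lt_succ_self) (hsucc n) (le_of_max_le_left hn),
    sub_div_le_div_log_rpow (by omega) hab.le (ha.trans hab) hρ hc hα
      ((hmem n).pos (by omega) (by omega)) (hsucc n) (le_of_max_le_right hn)⟩

end IsPowMulPow

/-- **Gap estimates for the Furstenberg sequence (Tijdeman-type, explicit exponents).**
If `α = log 2 / log 3` is `ρ`-diophantine, and `s_0 < s_1 < ⋯` enumerates the
Furstenberg set `S = {2^j 3^k}` in increasing order, then there are constants
`c', C' > 0` such that for all sufficiently large `n`:
`c'/(log s_n)^ρ ≤ (s_{n+1} - s_n)/s_n ≤ C'/(log s_n)^{1/(ρ+1)}`. -/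
theorem furstenberg_gap_bounds (ρ : ℝ) (hρ : 0 < ρ) (c : ℝ) (hc : 0 < c)
    (hdio : ∀ n : ℕ, 0 < n →
      c * (n : ℝ) ^ (-ρ) ≤
        |(n : ℝ) * (Real.log 2 / Real.log 3) -
          round ((n : ℝ) * (Real.log 2 / Real.log 3))|) :
    ∃ c' > (0 : ℝ), ∃ C' > (0 : ℝ), ∀ᶠ n : ℕ in atTop,
      c' / (Real.log (Nat.nth (fun m : ℕ => ∃ j k : ℕ, m = 2 ^ j * 3 ^ k) n)) ^ ρ
          ≤ ((Nat.nth (fun m : ℕ => ∃ j k : ℕ, m = 2 ^ j * 3 ^ k) (n + 1) : ℝ)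
              - (Nat.nth (fun m : ℕ => ∃ j k : ℕ, m = 2 ^ j * 3 ^ k) n : ℝ))
            / (Nat.nth (fun m : ℕ => ∃ j k : ℕ, m = 2 ^ j * 3 ^ k) n : ℝ)
      ∧ ((Nat.nth (fun m : ℕ => ∃ j k : ℕ, m = 2 ^ j * 3 ^ k) (n + 1) : ℝ)
              - (Nat.nth (fun m : ℕ => ∃ j k : ℕ, m = 2 ^ j * 3 ^ k) n : ℝ))
            / (Nat.nth (fun m : ℕ => ∃ j k : ℕ, m = 2 ^ j * 3 ^ k) n : ℝ)
          ≤ C' / (Real.log (Nat.nth (fun m : ℕ => ∃ j k : ℕ, m = 2 ^ j * 3 ^ k) n))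
              ^ (1 / (ρ + 1)) := by
  have hα : DiophantineWith ρ c (log (2 : ℕ) / log (3 : ℕ)) := fun q hq p => by
    have := (hdio q hq).trans (round_le _ p)
    rwa [rpow_neg (Nat.cast_nonneg q), ← div_eq_mul_inv] at this
  exact IsPowMulPow.nth_gap_bounds (by norm_num) (by norm_num) hρ.le hc hα
end

section
/- (Davenport–Erdős–LeVêque criterion.) Let (Ω, 𝒜, μ) be a probability space, and let (X_n) be a sequence of complex-valued random variables with |X_n| ≤ 1 for all n. Let A_n = (1/n) ∑_{j=1}^n X_j. If ∑_{n=1}^∞ (1/n) ∫_Ω |A_n|² dμ < ∞, then A_n → 0 μ-almost everywhere. -/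
/-!
By monotone convergence, `∑ (1/n) ∫ |A_n|² < ∞` makes `∑ |A_n(ω)|² / n` finite for almost every
`ω`, so it suffices to treat one fixed `ω`. There the Cesàro averages drift slowly:
`|A_m| ≤ |A_n| + 2(n - m)/n` for `m ≤ n`. Hence `|A_N| ≥ ε` forces `|A_n| ≥ ε/2` on a window
`N ≤ n < (1 + θ) N` with `θ ≍ ε`, and such a window contributes at least a fixed `c(ε) > 0` to
`∑ |A_n|² / n`. Convergence of the series therefore allows only finitely many such `N`.
-/

open Filter MeasureTheory Finset Topology

noncomputable def cesaroMean {𝕜 : Type*} [RCLike 𝕜] (x : ℕ → 𝕜) (n : ℕ) : 𝕜 :=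
  (n : 𝕜)⁻¹ * ∑ j ∈ range n, x j

section CesaroMean

variable {𝕜 : Type*} [RCLike 𝕜] {x : ℕ → 𝕜}

lemma norm_sum_le_card_of_norm_le_one {ι E : Type*} [SeminormedAddCommGroup E] (s : Finset ι)
    {f : ι → E} (hf : ∀ i ∈ s, ‖f i‖ ≤ 1) : ‖∑ i ∈ s, f i‖ ≤ #s := by
  simpa using norm_sum_le_of_le s hf

lemma norm_cesaroMean_le_one (hx : ∀ j, ‖x j‖ ≤ 1) (n : ℕ) : ‖cesaroMean x n‖ ≤ 1 := by
  rcases n.eq_zero_or_pos with rfl | hn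
  · simp [cesaroMean]
  rw [cesaroMean, norm_mul, norm_inv, RCLike.norm_natCast, inv_mul_le_one₀ (by positivity)]
  simpa using norm_sum_le_card_of_norm_le_one (range n) fun j _ ↦ hx j

lemma norm_cesaroMean_le_add (hx : ∀ j, ‖x j‖ ≤ 1) {m n : ℕ} (hm : 0 < m) (hmn : m ≤ n) :
    ‖cesaroMean x m‖ ≤ ‖cesaroMean x n‖ + 2 * (n - m) / n := by
  refine (norm_le_norm_add_norm_sub' _ (cesaroMean x n)).trans (add_le_add le_rfl ?_)
  have hmR : (0 : ℝ) < m := by exact_mod_cast hm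
  have hmnR : (m : ℝ) ≤ n := by exact_mod_cast hmn
  have hsplit : cesaroMean x m - cesaroMean x n =
      (((m : ℝ)⁻¹ - (n : ℝ)⁻¹ : ℝ) : 𝕜) * ∑ j ∈ range m, x j - (n : 𝕜)⁻¹ * ∑ j ∈ Ico m n, x j := by
    rw [cesaroMean, cesaroMean, ← sum_range_add_sum_Ico _ hmn]
    push_cast
    ring
  have hinv : (n : ℝ)⁻¹ ≤ (m : ℝ)⁻¹ := inv_anti₀ hmR hmnR
  calc ‖cesaroMean x m - cesaroMean x n‖
      ≤ ((m : ℝ)⁻¹ - (n : ℝ)⁻¹) * m + (n : ℝ)⁻¹ * (n - m) := by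
        rw [hsplit]
        refine norm_sub_le_of_le ?_ ?_
        · rw [norm_mul, RCLike.norm_ofReal, abs_of_nonneg (sub_nonneg.2 hinv)]
          gcongr
          simpa using norm_sum_le_card_of_norm_le_one (range m) fun j _ ↦ hx j
        · rw [norm_mul, norm_inv, RCLike.norm_natCast]
          gcongr
          simpa [Nat.cast_sub hmn] using norm_sum_le_card_of_norm_le_one (Ico m n) fun j _ ↦ hx j
    _ = 2 * (n - m) / n := by
        have hnR : (0 : ℝ) < n := hmR.trans_le hmnR
        field_simp
        ring

end CesaroMean

lemma Summable.eventually_sum_Ico_lt {b : ℕ → ℝ} (hb : Summable b) (hb0 : ∀ n, 0 ≤ b n)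
    {δ : ℝ} (hδ : 0 < δ) : ∀ᶠ N in atTop, ∀ K, ∑ n ∈ Ico N (N + K), b n < δ := by
  filter_upwards [(tendsto_order.1 (tendsto_sum_nat_add b)).2 δ hδ] with N hN K
  calc ∑ n ∈ Ico N (N + K), b n = ∑ k ∈ range K, b (k + N) := by
        simp [sum_Ico_eq_sum_range, add_comm]
    _ ≤ ∑' k, b (k + N) :=
        ((summable_nat_add_iff N).2 hb).sum_le_tsum _ fun k _ ↦ hb0 (k + N)
    _ < δ := hN

section AlmostDecreasing

variable {a : ℕ → ℝ} {C : ℝ}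

lemma le_sum_Ico_sq_div (hC : 0 ≤ C)
    (ha : ∀ m n : ℕ, 0 < m → m ≤ n → a m ≤ a n + C * (n - m) / n)
    {ε : ℝ} (hε : 0 ≤ ε) {N K : ℕ} (hN : 0 < N) (hK : C * K ≤ ε / 2 * N) (haN : ε ≤ a N) :
    K * (ε / 2) ^ 2 / (N + K) ≤ ∑ n ∈ Ico N (N + K), a n ^ 2 / n := by
  have hterm : ∀ n ∈ Ico N (N + K), (ε / 2) ^ 2 / (N + K) ≤ a n ^ 2 / n := by
    intro n hn
    obtain ⟨hNn, hnK⟩ := mem_Ico.1 hn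
    have hNnR : (N : ℝ) ≤ n := by exact_mod_cast hNn
    have hnKR : (n : ℝ) ≤ N + K := by exact_mod_cast hnK.le
    have hNR : (0 : ℝ) < N := by exact_mod_cast hN
    have hdrift : C * (n - N) / n ≤ ε / 2 := by
      rw [div_le_iff₀ (by linarith)]
      nlinarith
    have han : ε / 2 ≤ a n := by linarith [ha N n hN hNn]
    have hnR : (0 : ℝ) < n := hNR.trans_le hNnR
    gcongr
  calc K * (ε / 2) ^ 2 / (N + K) = ∑ n ∈ Ico N (N + K), (ε / 2) ^ 2 / (N + K) := by
        simp only [sum_const, Nat.card_Ico, add_tsub_cancel_left, nsmul_eq_mul]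
        ring
    _ ≤ ∑ n ∈ Ico N (N + K), a n ^ 2 / n := sum_le_sum hterm

theorem tendsto_zero_of_summable_sq_div (ha0 : ∀ n, 0 ≤ a n)
    (ha : ∀ m n : ℕ, 0 < m → m ≤ n → a m ≤ a n + C * (n - m) / n)
    (hs : Summable fun n ↦ a n ^ 2 / n) : Tendsto a atTop (𝓝 0) := by
  wlog hC : 0 < C generalizing C
  · refine this (C := max C 1) (fun m n hm hmn ↦ (ha m n hm hmn).trans ?_) (by positivity)
    have : (m : ℝ) ≤ n := by exact_mod_cast hmn
    gcongr
    exact le_max_left C 1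
  refine tendsto_order.2 ⟨fun e he ↦ .of_forall fun n ↦ he.trans_le (ha0 n), fun ε hε ↦ ?_⟩
  by_contra hfreq
  simp only [not_eventually, not_lt] at hfreq
  -- On `[N, N + θN)` the drift `C θ` is at most `ε/2`, so such a window starting at `a N ≥ ε`
  -- carries mass at least `(ε/2)² θ / (2(1 + θ))` in `∑ a n ^ 2 / n`.
  set θ := ε / (2 * C) with hθ
  have hθ0 : 0 < θ := by positivity
  obtain ⟨N, haN, htail, hNθ⟩ := (hfreq.and_eventually ((hs.eventually_sum_Ico_lt
    (fun n ↦ by positivity) (by positivity : 0 < (ε / 2) ^ 2 * θ / (2 * (1 + θ)))).and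
    (eventually_ge_atTop ⌈2 / θ⌉₊))).exists
  have hθN : 2 ≤ θ * N := by
    have := (Nat.ceil_le.1 hNθ)
    rwa [div_le_iff₀ hθ0, mul_comm] at this
  have hN : 0 < N := by
    have : (0 : ℝ) < N := by nlinarith
    exact_mod_cast this
  set K := ⌊θ * N⌋₊
  have hK_le : (K : ℝ) ≤ θ * N := Nat.floor_le (by positivity)
  have hK_ge : θ * N < K + 1 := Nat.lt_floor_add_one _
  have hCK : C * K ≤ ε / 2 * N := by
    calc C * K ≤ C * (θ * N) := by gcongr
      _ = ε / 2 * N := by rw [hθ]; field_simp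
  have hwindow := le_sum_Ico_sq_div hC.le ha hε.le hN hCK haN
  have hlower : (ε / 2) ^ 2 * θ / (2 * (1 + θ)) ≤ K * (ε / 2) ^ 2 / (N + K) := by
    rw [div_le_div_iff₀ (by positivity) (by positivity)]
    have : θ * (N + K) ≤ K * (2 * (1 + θ)) := by nlinarith
    nlinarith [sq_nonneg (ε / 2)]
  linarith [htail K]

end AlmostDecreasing

theorem ae_summable_norm_of_summable_integral_norm {α E ι : Type*} [MeasurableSpace α]
    {μ : Measure α} [NormedAddCommGroup E] [Countable ι] {F : ι → α → E}
    (hF_int : ∀ i, Integrable (F i) μ) (hF_sum : Summable fun i ↦ ∫ a, ‖F i a‖ ∂μ) :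
    ∀ᵐ a ∂μ, Summable fun i ↦ ‖F i a‖ := by
  have hmeas : ∀ i, AEMeasurable (fun a ↦ ‖F i a‖ₑ) μ :=
    fun i ↦ (hF_int i).aestronglyMeasurable.enorm
  have hfin : ∫⁻ a, ∑' i, ‖F i a‖ₑ ∂μ ≠ ⊤ := by
    rw [lintegral_tsum hmeas]
    simp_rw [← ofReal_integral_norm_eq_lintegral_enorm (hF_int _)]
    rw [← ENNReal.ofReal_tsum_of_nonneg (fun i ↦ integral_nonneg fun a ↦ norm_nonneg _) hF_sum]
    exact ENNReal.ofReal_ne_top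
  filter_upwards [ae_lt_top' (AEMeasurable.tsum hmeas) hfin] with a ha
  exact NNReal.summable_coe.2 (ENNReal.tsum_coe_ne_top_iff_summable.1 ha.ne)

/-- **Davenport–Erdős–LeVêque criterion.**
Let `(Ω, 𝒜, μ)` be a probability space and `(X_n)` complex random variables with
`|X_n| ≤ 1`. If the Cesàro averages `A_n = (1/n) ∑_{j<n} X_j` satisfy
`∑_n (1/n) ∫ |A_n|² dμ < ∞`, then `A_n → 0` `μ`-almost everywhere. -/
theorem davenport_erdos_leveque {Ω : Type*} [MeasurableSpace Ω]
    (μ : Measure Ω) [IsProbabilityMeasure μ] (X : ℕ → Ω → ℂ)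
    (hmeas : ∀ n, AEStronglyMeasurable (X n) μ)
    (hbd : ∀ n ω, ‖X n ω‖ ≤ 1)
    (hsum : Summable (fun n : ℕ =>
      (n : ℝ)⁻¹ * ∫ ω, ‖(n : ℂ)⁻¹ * ∑ j ∈ Finset.range n, X j ω‖ ^ 2 ∂μ)) :
    ∀ᵐ ω ∂μ, Tendsto (fun n : ℕ => (n : ℂ)⁻¹ * ∑ j ∈ Finset.range n, X j ω)
      atTop (nhds 0) := by
  change ∀ᵐ ω ∂μ, Tendsto (cesaroMean (X · ω)) atTop (𝓝 0)
  have hsq_int (n : ℕ) : Integrable (fun ω ↦ ‖cesaroMean (X · ω) n‖ ^ 2) μ := by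
    refine .of_bound ?_ 1 (.of_forall fun ω ↦ ?_)
    · exact ((Finset.aestronglyMeasurable_fun_sum _ fun j _ ↦ hmeas j).const_mul _).norm.pow 2
    · simpa using norm_cesaroMean_le_one (hbd · ω) n
  have hsummable := ae_summable_norm_of_summable_integral_norm
    (F := fun (n : ℕ) ω ↦ (n : ℝ)⁻¹ * ‖cesaroMean (X · ω) n‖ ^ 2) (fun n ↦ (hsq_int n).const_mul _)
    (by simpa [integral_const_mul, cesaroMean] using hsum)
  filter_upwards [hsummable] with ω hω
  rw [tendsto_zero_iff_norm_tendsto_zero]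
  refine tendsto_zero_of_summable_sq_div (C := 2) (fun n ↦ norm_nonneg _)
    (fun m n hm hmn ↦ norm_cesaroMean_le_add (hbd · ω) hm hmn) ?_
  simpa [div_eq_inv_mul] using hω
end

section
/- Suppose the Furstenberg sequence (s_n) is Hartman uniformly distributed, i.e. (1/N) ∑_{n=1}^N exp(2πi s_n x) → 0 for every x ∈ 𝕋 \ {0}. Then every atomless probability measure μ on 𝕋 = ℝ/ℤ that is invariant under both x ↦ 2x mod 1 and x ↦ 3x mod 1 is equal to the Haar (Lebesgue) measure on 𝕋. (In other words, Hartman uniform distribution of S would imply the Furstenberg ×2×3 conjecture.) -/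
/-!
Invariance under `×2` and `×3` gives `μ̂(s m) = μ̂(m)` for every `s ∈ S`, so `μ̂(m)` is the
integral against `μ` of the Hartman averages `(1/N) ∑_{n<N} e(s_n m x)`. For `m ≠ 0` these tend to
`0` at every `x` outside the finite set `{x | m x = 0}`, which the atomless `μ` does not charge;
by dominated convergence `μ̂(m) = 0`. Thus `μ` has the Fourier coefficients of Lebesgue measure,
and a finite measure on the circle is determined by its Fourier coefficients since trigonometric
polynomials are dense in `C(𝕋)`.
-/

open Real Filter MeasureTheory
open scoped Topology

lemma ContinuousMap.integrable_of_compactSpace {X E : Type*} [TopologicalSpace X] [CompactSpace X]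
    [MeasurableSpace X] [OpensMeasurableSpace X] [NormedAddCommGroup E] (μ : Measure X)
    [IsFiniteMeasure μ] (f : C(X, E)) : Integrable f μ :=
  f.continuous.integrable_of_hasCompactSupport (.of_compactSpace _)

namespace AddCircle

variable {T : ℝ}

lemma fourier_zsmul (k m : ℤ) (x : AddCircle T) : fourier k (m • x) = fourier (k * m) x := by
  rw [fourier_apply, fourier_apply, mul_zsmul]

def HartmanUniformlyDistributed (T : ℝ) (k : ℕ → ℤ) : Prop :=
  ∀ x : AddCircle T, x ≠ 0 →
    Tendsto (fun N : ℕ => (N : ℂ)⁻¹ * ∑ n ∈ Finset.range N, fourier (k n) x) atTop (𝓝 0)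

lemma norm_average_fourier_le_one (k : ℕ → ℤ) (N : ℕ) (x : AddCircle T) :
    ‖(N : ℂ)⁻¹ * ∑ n ∈ Finset.range N, fourier (k n) x‖ ≤ 1 := by
  calc ‖(N : ℂ)⁻¹ * ∑ n ∈ Finset.range N, fourier (k n) x‖
      ≤ (N : ℝ)⁻¹ * ∑ n ∈ Finset.range N, ‖fourier (k n) x‖ := by
        rw [norm_mul, norm_inv, Complex.norm_natCast]
        gcongr
        exact norm_sum_le _ _
    _ = (N : ℝ)⁻¹ * N := by simp [fourier_apply, Circle.norm_coe]
    _ ≤ 1 := inv_mul_le_one_of_le₀ le_rfl (Nat.cast_nonneg N)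

def measurePreservingMultipliers (μ : Measure (AddCircle T)) : Submonoid ℕ where
  carrier := {q | MeasurePreserving (fun x => q • x) μ μ}
  one_mem' := by simp only [Set.mem_ofPred_eq, one_nsmul]; exact .id μ
  mul_mem' {a b} ha hb := by
    simpa only [Set.mem_ofPred_eq, mul_nsmul', Function.comp_def] using ha.comp hb

lemma mem_measurePreservingMultipliers_of_map_eq {μ : Measure (AddCircle T)} {q : ℕ}
    (h : μ.map (fun x => q • x) = μ) : q ∈ measurePreservingMultipliers μ :=
  ⟨by fun_prop, h⟩

lemma integral_fourier_mul_of_mem_measurePreservingMultipliers {μ : Measure (AddCircle T)}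
    {q : ℕ} (hq : q ∈ measurePreservingMultipliers μ) (m : ℤ) :
    ∫ x, fourier (q * m) x ∂μ = ∫ x, fourier m x ∂μ := by
  have hq : MeasurePreserving (fun x => q • x) μ μ := hq
  conv_rhs => rw [← hq.map_eq]
  rw [integral_map hq.measurable.aemeasurable (map_continuous _).aestronglyMeasurable]
  simp only [← natCast_zsmul, fourier_zsmul, mul_comm]

variable [Fact (0 < T)]

lemma integral_fourier_eq_zero_of_isAddRightInvariant (μ : Measure (AddCircle T))
    [μ.IsAddRightInvariant] {m : ℤ} (hm : m ≠ 0) : ∫ x, fourier m x ∂μ = 0 :=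
  -- translation by `T / (2 * m)` changes the sign of `fourier m`
  integral_eq_zero_of_add_right_eq_neg (fourier_add_half_inv_index hm Fact.out)

lemma integral_eq_of_mem_span_fourier {μ ν : Measure (AddCircle T)} [IsFiniteMeasure μ]
    [IsFiniteMeasure ν] (h : ∀ n, ∫ x, fourier n x ∂μ = ∫ x, fourier n x ∂ν)
    {f : C(AddCircle T, ℂ)} (hf : f ∈ Submodule.span ℂ (Set.range fourier)) :
    ∫ x, f x ∂μ = ∫ x, f x ∂ν := by
  induction hf using Submodule.span_induction with
  | mem g hg => obtain ⟨n, rfl⟩ := hg; exact h n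
  | zero => simp
  | add g g' _ _ hg hg' =>
    simp only [ContinuousMap.add_apply]
    rw [integral_add (g.integrable_of_compactSpace μ) (g'.integrable_of_compactSpace μ),
      integral_add (g.integrable_of_compactSpace ν) (g'.integrable_of_compactSpace ν), hg, hg']
  | smul c g _ hg => simp only [ContinuousMap.smul_apply, integral_smul, hg]

theorem measure_ext_of_integral_fourier_eq {μ ν : Measure (AddCircle T)} [IsFiniteMeasure μ]
    [IsFiniteMeasure ν] (h : ∀ n, ∫ x, fourier n x ∂μ = ∫ x, fourier n x ∂ν) : μ = ν := by
  let A := (fourierSubalgebra (T := T)).comap (BoundedContinuousFunction.toContinuousMapStarₐ ℂ)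
  refine ext_of_forall_mem_subalgebra_integral_eq_of_polish (A := A) ?_ fun g hg =>
    integral_eq_of_mem_span_fourier h (f := g.toContinuousMap) ?_
  · refine Subalgebra.separatesPoints_monotone (fun f hf => ?_) fourierSubalgebra_separatesPoints
    exact ⟨BoundedContinuousFunction.mkOfCompact f, hf, rfl⟩
  · rw [← fourierSubalgebra_coe]
    exact hg

lemma tendsto_average_integral_fourier_of_hartman {μ : Measure (AddCircle T)} [IsFiniteMeasure μ]
    [NullSingletonClass μ] {k : ℕ → ℤ} (hk : HartmanUniformlyDistributed T k) {m : ℤ}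
    (hm : m ≠ 0) :
    Tendsto (fun N : ℕ => (N : ℂ)⁻¹ * ∑ n ∈ Finset.range N, ∫ x, fourier (k n * m) x ∂μ)
      atTop (𝓝 0) := by
  have haverage_eq_integral : ∀ N : ℕ, (N : ℂ)⁻¹ * ∑ n ∈ Finset.range N, ∫ x, fourier (k n * m) x ∂μ
      = ∫ x, (N : ℂ)⁻¹ * ∑ n ∈ Finset.range N, fourier (k n) (m • x) ∂μ := fun N => by
    simp only [fourier_zsmul]
    rw [integral_const_mul,
      integral_finsetSum _ fun n _ => (fourier _).integrable_of_compactSpace μ]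
  simp only [haverage_eq_integral]
  have htorsion : μ {x | m • x = 0} = 0 :=
    (finite_torsion_of_isSMulRegular_int T m (.of_ne_zero hm)).measure_zero μ
  have hae : ∀ᵐ x ∂μ, m • x ≠ 0 := measure_eq_zero_iff_ae_notMem.mp htorsion
  simpa using tendsto_integral_of_dominated_convergence (fun _ => 1)
    (fun N => Continuous.aestronglyMeasurable (by fun_prop))
    (integrable_const 1)
    (fun N => .of_forall fun x => norm_average_fourier_le_one k N (m • x))
    (hae.mono fun x hx => hk _ hx)

lemma integral_fourier_eq_zero_of_hartman {μ : Measure (AddCircle T)} [IsFiniteMeasure μ]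
    [NullSingletonClass μ] {k : ℕ → ℤ} (hk : HartmanUniformlyDistributed T k) {m : ℤ}
    (hinv : ∀ n, ∫ x, fourier (k n * m) x ∂μ = ∫ x, fourier m x ∂μ) (hm : m ≠ 0) :
    ∫ x, fourier m x ∂μ = 0 := by
  refine tendsto_nhds_unique (tendsto_const_nhds.congr' ?_)
    (tendsto_average_integral_fourier_of_hartman (μ := μ) hk hm)
  filter_upwards [eventually_ne_atTop 0] with N hN
  rw [Finset.sum_congr rfl fun n _ => hinv n, Finset.sum_const, Finset.card_range, nsmul_eq_mul,
    inv_mul_cancel_left₀ (Nat.cast_ne_zero.mpr hN)]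

end AddCircle

/-- **Hartman uniform distribution of `S` would imply the Furstenberg ×2×3 conjecture.**
If the Furstenberg sequence `(s_n)` satisfies `(1/N) ∑_{n<N} e(s_n x) → 0` for every
`x ≠ 0` in `𝕋 = ℝ/ℤ`, then every atomless probability measure on `𝕋` invariant under
`x ↦ 2x` and `x ↦ 3x` equals the Haar (Lebesgue) measure. -/
theorem hartman_implies_furstenberg_conjecture
    (hH : ∀ x : AddCircle (1 : ℝ), x ≠ 0 →
      Tendsto (fun N : ℕ => (N : ℂ)⁻¹ *
          ∑ n ∈ Finset.range N,
            fourier ((Nat.nth (fun m : ℕ => ∃ j k : ℕ, m = 2 ^ j * 3 ^ k) n : ℕ) : ℤ) x)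
        atTop (nhds 0))
    (μ : Measure (AddCircle (1 : ℝ))) [IsProbabilityMeasure μ]
    (hcont : ∀ x : AddCircle (1 : ℝ), μ {x} = 0)
    (h2 : μ.map (fun x : AddCircle (1 : ℝ) => (2 : ℕ) • x) = μ)
    (h3 : μ.map (fun x : AddCircle (1 : ℝ) => (3 : ℕ) • x) = μ) :
    μ = volume := by
  have : Fact ((0 : ℝ) < 1) := ⟨one_pos⟩
  have : NullSingletonClass μ := ⟨hcont⟩
  have hS_infinite : {m : ℕ | ∃ j k : ℕ, m = 2 ^ j * 3 ^ k}.Infinite :=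
    Set.infinite_of_injective_forall_mem (Nat.pow_right_injective le_rfl) fun j => ⟨j, 0, by simp⟩
  have hS : ∀ n, Nat.nth (fun m : ℕ => ∃ j k : ℕ, m = 2 ^ j * 3 ^ k) n
      ∈ AddCircle.measurePreservingMultipliers μ := fun n => by
    obtain ⟨j, k, hjk⟩ := Nat.nth_mem_of_infinite hS_infinite n
    rw [hjk]
    exact mul_mem (pow_mem (AddCircle.mem_measurePreservingMultipliers_of_map_eq h2) j)
      (pow_mem (AddCircle.mem_measurePreservingMultipliers_of_map_eq h3) k)
  refine AddCircle.measure_ext_of_integral_fourier_eq fun m => ?_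
  rcases eq_or_ne m 0 with rfl | hm
  · simp [Measure.real, AddCircle.measure_univ]
  rw [AddCircle.integral_fourier_eq_zero_of_hartman (T := 1) hH
      (fun n => AddCircle.integral_fourier_mul_of_mem_measurePreservingMultipliers (hS n) m) hm,
    AddCircle.integral_fourier_eq_zero_of_isAddRightInvariant (T := 1) volume hm]
end

section
/- Let T be a measure-preserving transformation on a probability space (X, ℬ, μ) and let (G_n) ⊂ L¹(μ). Suppose G_n → G μ-a.e. and that G* := sup_n |G_n| ∈ L¹(μ). Then (1/n) ∑_{k=0}^{n−1} |G_{n−k} − G| ∘ T^k → 0 μ-a.e.; in particular, (1/n) ∑_{k=0}^{n−1} G_{n−k} ∘ T^k → 𝔼(G | ℐ) μ-a.e., where ℐ is the σ-field of T-invariant sets. -/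
open Real Filter MeasureTheory

/-- The σ-field of `T`-invariant (measurable) sets. -/
def invariantSigma {X : Type*} [m : MeasurableSpace X] (T : X → X) :
    MeasurableSpace X where
  MeasurableSet' s := MeasurableSet s ∧ T ⁻¹' s = s
  measurableSet_empty := ⟨MeasurableSet.empty, by simp⟩
  measurableSet_compl s hs :=
    ⟨hs.1.compl, by rw [Set.preimage_compl, hs.2]⟩
  measurableSet_iUnion f hf :=
    ⟨MeasurableSet.iUnion fun i => (hf i).1, by
      simp only [Set.preimage_iUnion]
      exact Set.iUnion_congr fun i => (hf i).2⟩

/-!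
Maker's argument. Put `F_N = sup_{m ≥ N} |G_m - G|`: it tends to `0` a.e. and is dominated by
`G* + |G|`. Splitting the sum at `k = n - N` bounds the average of `|G_{n-k} - G| ∘ T^k` by the
Birkhoff average of `F_N` plus the boundary term `(S_n F_0 - S_{n-N} F_0) / n → 0`, so by Birkhoff's
theorem its upper limit is at most `𝔼(F_N | ℐ)`. Since `∫ 𝔼(F_N | ℐ) = ∫ F_N → 0`, Markov's
inequality makes `inf_N 𝔼(F_N | ℐ)` vanish a.e.

Birkhoff's theorem itself comes from Garsia's maximal inequality: if `𝔼(g | ℐ) = 0` and `c > 0`, the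
invariant set `{limsup S_n g / n > c}` carries `∫ g ≥ c μ(·)`, while `∫ g = 0` on invariant sets.
-/

open Set
open scoped Topology

theorem invariantSigma_le {X : Type*} [MeasurableSpace X] (T : X → X) :
    invariantSigma T ≤ ‹MeasurableSpace X› :=
  MeasurableSpace.invariants_le T

/-- Garsia's running maximum `max (S₀, …, Sₙ)` of the Birkhoff sums `Sₖ = birkhoffSum T g k`
(`S₀ = 0`), defined through the recursion `M₍ₙ₊₁₎ = max 0 (g + Mₙ ∘ T)`. -/
noncomputable def birkhoffMax {X : Type*} (T : X → X) (g : X → ℝ) : ℕ → X → ℝ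
  | 0 => 0
  | n + 1 => fun x => max 0 (g x + birkhoffMax T g n (T x))

section Garsia

variable {X : Type*} {T : X → X} {g : X → ℝ}

theorem birkhoffMax_nonneg : ∀ n x, 0 ≤ birkhoffMax T g n x
  | 0, _ => le_rfl
  | _ + 1, _ => le_max_left _ _

theorem birkhoffMax_le_succ (n : ℕ) (x : X) :
    birkhoffMax T g n x ≤ birkhoffMax T g (n + 1) x := by
  induction n generalizing x with
  | zero => exact birkhoffMax_nonneg 1 x
  | succ n ih => exact max_le_max le_rfl (add_le_add le_rfl (ih (T x)))

theorem birkhoffSum_le_birkhoffMax (n : ℕ) (x : X) :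
    birkhoffSum T g n x ≤ birkhoffMax T g n x := by
  induction n generalizing x with
  | zero => exact le_rfl
  | succ n ih =>
    rw [birkhoffSum_succ']
    exact le_max_of_le_right (add_le_add le_rfl (ih (T x)))

theorem exists_birkhoffSum_eq_birkhoffMax (n : ℕ) (x : X) :
    ∃ k, birkhoffSum T g k x = birkhoffMax T g n x := by
  induction n generalizing x with
  | zero => exact ⟨0, rfl⟩
  | succ n ih =>
    obtain ⟨k, hk⟩ := ih (T x)
    rcases le_total 0 (g x + birkhoffMax T g n (T x)) with h | h
    · exact ⟨k + 1, by rw [birkhoffSum_succ', hk]; exact (max_eq_right h).symm⟩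
    · exact ⟨0, (max_eq_left h).symm⟩

theorem exists_birkhoffMax_succ_pos_iff (x : X) :
    (∃ n, 0 < birkhoffMax T g (n + 1) x) ↔ ∃ n, 0 < birkhoffSum T g n x := by
  constructor
  · rintro ⟨n, hn⟩
    obtain ⟨k, hk⟩ := exists_birkhoffSum_eq_birkhoffMax (n + 1) x
    exact ⟨k, hk ▸ hn⟩
  · rintro ⟨n, hn⟩
    exact ⟨n, hn.trans_le ((birkhoffSum_le_birkhoffMax n x).trans (birkhoffMax_le_succ n x))⟩

theorem birkhoffMax_sub_comp_le_indicator (n : ℕ) (x : X) :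
    birkhoffMax T g n x - birkhoffMax T g n (T x) ≤
      {y | 0 < birkhoffMax T g (n + 1) y}.indicator g x := by
  have hle : birkhoffMax T g n x ≤ birkhoffMax T g (n + 1) x := birkhoffMax_le_succ n x
  by_cases hx : 0 < birkhoffMax T g (n + 1) x
  · have hsucc : birkhoffMax T g (n + 1) x = g x + birkhoffMax T g n (T x) :=
      max_eq_right (lt_max_iff.1 hx |>.resolve_left (lt_irrefl 0)).le
    simp only [indicator_apply, mem_ofPred_eq, hx, if_true]
    linarith
  · simp only [indicator_apply, mem_ofPred_eq, hx, if_false]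
    linarith [not_lt.1 hx, birkhoffMax_nonneg (T := T) (g := g) n (T x)]

theorem birkhoffSum_indicator_of_preimage_eq {E : Set X} (hE : T ⁻¹' E = E) (n : ℕ) (x : X) :
    birkhoffSum T (E.indicator g) n x = E.indicator (birkhoffSum T g n) x := by
  have horbit : ∀ k, T^[k] x ∈ E ↔ x ∈ E := fun k =>
    Set.ext_iff.1 (Function.IsFixedPt.preimage_iterate hE k) x
  by_cases hx : x ∈ E <;> simp [birkhoffSum, horbit, hx]

end Garsia

section MaximalErgodic

variable {X : Type*} [MeasurableSpace X] {μ : Measure X} {T : X → X} {g : X → ℝ}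

theorem measurable_birkhoffSum (hT : Measurable T) (hg : Measurable g) (n : ℕ) :
    Measurable (birkhoffSum T g n) :=
  Finset.measurable_sum _ fun k _ => hg.comp (hT.iterate k)

theorem measurable_birkhoffMax (hT : Measurable T) (hg : Measurable g) :
    ∀ n, Measurable (birkhoffMax T g n)
  | 0 => measurable_const
  | n + 1 => measurable_const.max (hg.add ((measurable_birkhoffMax hT hg n).comp hT))

theorem integrable_birkhoffMax (hT : MeasurePreserving T μ μ) (hg : Integrable g μ) :
    ∀ n, Integrable (birkhoffMax T g n) μ
  | 0 => integrable_zero _ _ _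
  | n + 1 => (integrable_zero _ _ _).sup
      (hg.add (hT.integrable_comp_of_integrable (integrable_birkhoffMax hT hg n)))

theorem setIntegral_birkhoffMax_succ_pos_nonneg (hT : MeasurePreserving T μ μ)
    (hg : Measurable g) (hgi : Integrable g μ) (n : ℕ) :
    0 ≤ ∫ x in {x | 0 < birkhoffMax T g (n + 1) x}, g x ∂μ := by
  have hE : MeasurableSet {x | 0 < birkhoffMax T g (n + 1) x} :=
    measurableSet_lt measurable_const (measurable_birkhoffMax hT.measurable hg _)
  have hM := integrable_birkhoffMax hT hgi n
  have hMT_int : Integrable (fun x => birkhoffMax T g n (T x)) μ :=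
    hT.integrable_comp_of_integrable hM
  have hMT : ∫ x, birkhoffMax T g n (T x) ∂μ = ∫ x, birkhoffMax T g n x ∂μ := by
    rw [← integral_map hT.aemeasurable (by rw [hT.map_eq]; exact hM.1), hT.map_eq]
  calc 0 = ∫ x, (birkhoffMax T g n x - birkhoffMax T g n (T x)) ∂μ := by
        rw [integral_sub hM hMT_int, hMT, sub_self]
    _ ≤ ∫ x, {x | 0 < birkhoffMax T g (n + 1) x}.indicator g x ∂μ :=
        integral_mono (hM.sub hMT_int) (hgi.indicator hE)
          (birkhoffMax_sub_comp_le_indicator n)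
    _ = _ := integral_indicator hE

theorem maximal_ergodic_theorem (hT : MeasurePreserving T μ μ) (hg : Measurable g)
    (hgi : Integrable g μ) :
    0 ≤ ∫ x in {x | ∃ n, 0 < birkhoffSum T g n x}, g x ∂μ := by
  have hunion : {x | ∃ n, 0 < birkhoffSum T g n x} =
      ⋃ n, {x | 0 < birkhoffMax T g (n + 1) x} := by
    ext x
    simp [exists_birkhoffMax_succ_pos_iff]
  have hmono : Monotone fun n => {x | 0 < birkhoffMax T g (n + 1) x} :=
    monotone_nat_of_le_succ fun n x hx => hx.trans_le (birkhoffMax_le_succ (n + 1) x)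
  rw [hunion]
  exact ge_of_tendsto (tendsto_setIntegral_of_monotone
    (fun n => measurableSet_lt measurable_const (measurable_birkhoffMax hT.measurable hg _))
    hmono hgi.integrableOn)
    (Eventually.of_forall (setIntegral_birkhoffMax_succ_pos_nonneg hT hg hgi))

theorem setIntegral_nonneg_of_exists_birkhoffSum_pos (hT : MeasurePreserving T μ μ)
    (hg : Measurable g) (hgi : Integrable g μ) {E : Set X} (hE : MeasurableSet E)
    (hET : T ⁻¹' E = E) (hpos : ∀ x ∈ E, ∃ n, 0 < birkhoffSum T g n x) :
    0 ≤ ∫ x in E, g x ∂μ := by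
  have hset : {x | ∃ n, 0 < birkhoffSum T (E.indicator g) n x} = E := by
    ext x
    by_cases hx : x ∈ E <;> simp [birkhoffSum_indicator_of_preimage_eq hET, hx, hpos x]
  have := maximal_ergodic_theorem hT (hg.indicator hE) (hgi.indicator hE)
  rwa [hset, setIntegral_indicator hE, inter_self] at this

end MaximalErgodic

theorem frequently_atTop_iff_succ {p : ℕ → Prop} :
    (∃ᶠ n in atTop, p n) ↔ ∃ᶠ n in atTop, p (n + 1) := by
  rw [← map_add_atTop_eq_nat 1, frequently_map, map_add_atTop_eq_nat]

theorem frequently_natCast_mul_lt_of_add_le {u v : ℕ → ℝ} {a b C : ℝ} (hab : a < b)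
    (hu : ∃ᶠ n in atTop, n * b < u n) (huv : ∀ n, u n + C ≤ v n) :
    ∃ᶠ n in atTop, n * a < v n := by
  have hlarge : ∀ᶠ n : ℕ in atTop, (n : ℝ) * a < n * b + C := by
    filter_upwards [tendsto_natCast_atTop_atTop.eventually_gt_atTop (-C / (b - a))] with n hn
    have := (div_lt_iff₀ (sub_pos.2 hab)).1 hn
    linarith
  exact (hu.and_eventually hlarge).mono fun n hn => by linarith [huv n]

/-- The set `{x | c < limsup Sₙ(x) / n}`, written through rational levels so that it is
measurable and exactly `T`-invariant. -/
def birkhoffUpperSet {X : Type*} (T : X → X) (g : X → ℝ) (c : ℝ) : Set X :=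
  {x | ∃ q : ℚ, c < q ∧ ∃ᶠ n : ℕ in atTop, (n : ℝ) * q < birkhoffSum T g n x}

section UpperSet

variable {X : Type*} {T : X → X} {g : X → ℝ}

theorem preimage_birkhoffUpperSet (c : ℝ) :
    T ⁻¹' birkhoffUpperSet T g c = birkhoffUpperSet T g c := by
  -- `S₍ₙ₊₁₎ x = g x + Sₙ (T x)` moves the sums by a bounded amount, which passing to a smaller
  -- rational level absorbs.
  ext x
  simp only [birkhoffUpperSet, mem_preimage, mem_ofPred_eq]
  constructor
  · rintro ⟨q, hcq, hq⟩
    obtain ⟨r, hcr, hrq⟩ := exists_rat_btwn hcq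
    refine ⟨r, hcr, frequently_atTop_iff_succ.2 ?_⟩
    refine (frequently_natCast_mul_lt_of_add_le (C := g x - r) (v := fun n =>
      birkhoffSum T g (n + 1) x - r) hrq hq fun n => ?_).mono fun n hn => ?_
    · rw [birkhoffSum_succ']
      linarith
    · push_cast
      linarith
  · rintro ⟨q, hcq, hq⟩
    obtain ⟨r, hcr, hrq⟩ := exists_rat_btwn hcq
    refine ⟨r, hcr, frequently_natCast_mul_lt_of_add_le (C := q - g x)
      (u := fun n => birkhoffSum T g (n + 1) x - q) hrq ?_ fun n => ?_⟩
    · refine (frequently_atTop_iff_succ.1 hq).mono fun n hn => ?_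
      push_cast at hn
      linarith
    · rw [birkhoffSum_succ']
      linarith

theorem exists_birkhoffSum_sub_pos_of_mem_birkhoffUpperSet {c : ℝ} {x : X}
    (hx : x ∈ birkhoffUpperSet T g c) : ∃ n, 0 < birkhoffSum T (fun y => g y - c) n x := by
  obtain ⟨q, hcq, hq⟩ := hx
  obtain ⟨n, hn⟩ := hq.exists
  refine ⟨n, ?_⟩
  have hsum : birkhoffSum T (fun y => g y - c) n x = birkhoffSum T g n x - n * c := by
    simp [birkhoffSum, Finset.sum_sub_distrib]
  have : (n : ℝ) * c ≤ n * q := mul_le_mul_of_nonneg_left hcq.le n.cast_nonneg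
  linarith

end UpperSet

section Birkhoff

variable {X : Type*} [MeasurableSpace X] {μ : Measure X} {T : X → X} {g : X → ℝ}

theorem measurableSet_birkhoffUpperSet (hT : Measurable T) (hg : Measurable g) (c : ℝ) :
    MeasurableSet (birkhoffUpperSet T g c) := by
  simp only [birkhoffUpperSet, frequently_atTop, ofPred_exists, ofPred_and, ofPred_forall]
  exact .iUnion fun q => (MeasurableSet.const _).inter <| .iInter fun a => .iUnion fun b =>
    (MeasurableSet.const _).inter (measurableSet_lt measurable_const
      (measurable_birkhoffSum hT hg b))

variable [IsFiniteMeasure μ]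

theorem mul_measureReal_birkhoffUpperSet_le (hT : MeasurePreserving T μ μ) (hg : Measurable g)
    (hgi : Integrable g μ) (c : ℝ) :
    c * μ.real (birkhoffUpperSet T g c) ≤ ∫ x in birkhoffUpperSet T g c, g x ∂μ := by
  have := setIntegral_nonneg_of_exists_birkhoffSum_pos (g := fun y => g y - c) hT
    (hg.sub measurable_const) (hgi.sub (integrable_const c)) (measurableSet_birkhoffUpperSet hT.measurable hg c)
    (preimage_birkhoffUpperSet c) fun x => exists_birkhoffSum_sub_pos_of_mem_birkhoffUpperSet
  rw [integral_sub hgi.integrableOn (integrable_const c).integrableOn, setIntegral_const,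
    smul_eq_mul] at this
  linarith

theorem measure_birkhoffUpperSet_eq_zero (hT : MeasurePreserving T μ μ) (hg : Measurable g)
    (hgi : Integrable g μ) (hg0 : μ[g | invariantSigma T] =ᵐ[μ] 0) {c : ℝ} (hc : 0 < c) :
    μ (birkhoffUpperSet T g c) = 0 := by
  have hℐ : MeasurableSet[invariantSigma T] (birkhoffUpperSet T g c) :=
    ⟨measurableSet_birkhoffUpperSet hT.measurable hg c, preimage_birkhoffUpperSet c⟩
  have hint : ∫ x in birkhoffUpperSet T g c, g x ∂μ = 0 := by
    rw [← setIntegral_condExp (invariantSigma_le T) hgi hℐ,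
      integral_congr_ae (ae_restrict_of_ae hg0)]
    simp
  have := mul_measureReal_birkhoffUpperSet_le hT hg hgi c
  rw [hint] at this
  exact (measureReal_eq_zero_iff).1 (le_antisymm (nonpos_of_mul_nonpos_right this hc)
    measureReal_nonneg)

theorem ae_eventually_birkhoffAverage_lt (hT : MeasurePreserving T μ μ) (hg : Measurable g)
    (hgi : Integrable g μ) (hg0 : μ[g | invariantSigma T] =ᵐ[μ] 0) {ε : ℝ} (hε : 0 < ε) :
    ∀ᵐ x ∂μ, ∀ᶠ n in atTop, birkhoffAverage ℝ T g n x < ε := by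
  obtain ⟨q, hq, hqε⟩ := exists_rat_btwn (half_lt_self hε)
  filter_upwards [measure_eq_zero_iff_ae_notMem.1
    (measure_birkhoffUpperSet_eq_zero hT hg hgi hg0 (half_pos hε))] with x hx
  simp only [birkhoffUpperSet, mem_ofPred_eq, not_exists, not_and, not_frequently,
    not_lt] at hx
  filter_upwards [hx q hq, eventually_gt_atTop 0] with n hn hn0
  have hn0' : (0 : ℝ) < n := Nat.cast_pos.2 hn0
  rw [birkhoffAverage, smul_eq_mul, inv_mul_lt_iff₀ hn0']
  exact hn.trans_lt (mul_lt_mul_of_pos_left hqε hn0')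

theorem ae_tendsto_birkhoffAverage_zero (hT : MeasurePreserving T μ μ) (hg : Measurable g)
    (hgi : Integrable g μ) (hg0 : μ[g | invariantSigma T] =ᵐ[μ] 0) :
    ∀ᵐ x ∂μ, Tendsto (birkhoffAverage ℝ T g · x) atTop (𝓝 0) := by
  have hneg0 : μ[-g | invariantSigma T] =ᵐ[μ] 0 :=
    (condExp_neg g _).trans (hg0.neg.trans (by simp))
  have hup : ∀ᵐ x ∂μ, ∀ m : ℕ, ∀ᶠ n in atTop, birkhoffAverage ℝ T g n x < 1 / (m + 1) :=
    ae_all_iff.2 fun m => ae_eventually_birkhoffAverage_lt hT hg hgi hg0 (by positivity)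
  have hlow : ∀ᵐ x ∂μ, ∀ m : ℕ, ∀ᶠ n in atTop, birkhoffAverage ℝ T (-g) n x < 1 / (m + 1) :=
    ae_all_iff.2 fun m => ae_eventually_birkhoffAverage_lt hT hg.neg hgi.neg hneg0 (by positivity)
  filter_upwards [hup, hlow] with x hupx hlowx
  refine tendsto_order.2 ⟨fun a ha => ?_, fun a ha => ?_⟩
  · obtain ⟨m, hm⟩ := exists_nat_one_div_lt (neg_pos.2 ha)
    refine (hlowx m).mono fun n hn => ?_
    simp only [birkhoffAverage_neg, Pi.neg_apply] at hn
    linarith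
  · obtain ⟨m, hm⟩ := exists_nat_one_div_lt ha
    exact (hupx m).mono fun n hn => hn.trans hm

theorem ae_tendsto_birkhoffAverage_condExp (hT : MeasurePreserving T μ μ)
    (hg : Integrable g μ) :
    ∀ᵐ x ∂μ, Tendsto (birkhoffAverage ℝ T g · x) atTop (𝓝 (μ[g | invariantSigma T] x)) := by
  -- `𝔼(g | ℐ)` is `T`-invariant, so it equals its own Birkhoff averages, and the measurable
  -- version of `g - 𝔼(g | ℐ)` has zero conditional expectation.
  obtain ⟨g', hg'm, hgg'⟩ := hg.aemeasurable
  have hg' : Integrable g' μ := hg.congr hgg'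
  have hh : StronglyMeasurable[invariantSigma T] (μ[g | invariantSigma T]) :=
    stronglyMeasurable_condExp
  have hhT : μ[g | invariantSigma T] ∘ T = μ[g | invariantSigma T] :=
    MeasurableSpace.comp_eq_of_measurable_invariants hh.measurable
  have hr0 : μ[g' - μ[g | invariantSigma T] | invariantSigma T] =ᵐ[μ] 0 := by
    filter_upwards [condExp_sub hg' integrable_condExp (invariantSigma T),
      condExp_congr_ae (m := invariantSigma T) hgg'] with x hsub hcongr
    rw [hsub, Pi.sub_apply, condExp_of_stronglyMeasurable (invariantSigma_le T) hh
      integrable_condExp, ← hcongr, sub_self, Pi.zero_apply]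
  have hlim := ae_tendsto_birkhoffAverage_zero hT
    (hg'm.sub (hh.measurable.mono (invariantSigma_le T) le_rfl)) (hg'.sub integrable_condExp) hr0
  filter_upwards [hlim, ae_all_iff.2 fun n =>
    hT.quasiMeasurePreserving.birkhoffAverage_ae_eq_of_ae_eq ℝ hgg' n] with x hx hgx
  refine (zero_add (μ[g | invariantSigma T] x) ▸ hx.add_const _).congr' ?_
  filter_upwards [eventually_gt_atTop 0] with n hn
  rw [hgx n, birkhoffAverage_sub, Pi.sub_apply,
    birkhoffAverage_of_comp_eq ℝ hhT (Nat.cast_ne_zero.2 hn.ne'), Pi.sub_apply, sub_add_cancel]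

end Birkhoff

theorem tendsto_inv_mul_sub_sub_of_tendsto {s : ℕ → ℝ} {L : ℝ} (N : ℕ)
    (hs : Tendsto (fun n : ℕ => (n : ℝ)⁻¹ * s n) atTop (𝓝 L)) :
    Tendsto (fun n : ℕ => (n : ℝ)⁻¹ * (s n - s (n - N))) atTop (𝓝 0) := by
  rw [← tendsto_add_atTop_iff_nat N]
  have hshift : Tendsto (fun n => ((n + N : ℕ) : ℝ)⁻¹ * s (n + N)) atTop (𝓝 L) :=
    (tendsto_add_atTop_iff_nat N).2 hs
  have hlag : Tendsto (fun n => ((n + N : ℕ) : ℝ)⁻¹ * s n) atTop (𝓝 L) := by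
    refine (one_mul L ▸ (tendsto_natCast_div_add_atTop (N : ℝ)).mul hs).congr' ?_
    filter_upwards [eventually_gt_atTop 0] with n hn
    have : (n : ℝ) ≠ 0 := Nat.cast_ne_zero.2 hn.ne'
    push_cast
    field_simp
  simpa [Nat.add_sub_cancel, mul_sub] using hshift.sub hlag

theorem sum_range_le_of_le_tail {a b : ℕ → ℕ → ℝ} (n N : ℕ)
    (hab : ∀ m k, N ≤ m → a m k ≤ b N k) (hab₀ : ∀ m k, a m k ≤ b 0 k) (hb : ∀ k, 0 ≤ b N k) :
    ∑ k ∈ Finset.range n, a (n - k) k ≤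
      ∑ k ∈ Finset.range n, b N k + ∑ k ∈ Finset.Ico (n - N) n, b 0 k := by
  rw [← Finset.sum_range_add_sum_Ico _ (Nat.sub_le n N)]
  gcongr with k hk k
  · calc ∑ k ∈ Finset.range (n - N), a (n - k) k
        ≤ ∑ k ∈ Finset.range (n - N), b N k :=
          Finset.sum_le_sum fun k hk => hab _ k (by simp at hk; omega)
      _ ≤ ∑ k ∈ Finset.range n, b N k :=
          Finset.sum_le_sum_of_subset_of_nonneg (Finset.range_subset_range.2 (Nat.sub_le n N))
            fun k _ _ => hb k
  · exact hab₀ _ k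

noncomputable def tailSup {X : Type*} (G : ℕ → X → ℝ) (Glim : X → ℝ) (N : ℕ) (x : X) : ℝ :=
  ⨆ m, |G (m + N) x - Glim x|

section Maker

variable {X : Type*} {T : X → X} {G : ℕ → X → ℝ} {Glim : X → ℝ}

theorem tailSup_nonneg (N : ℕ) (x : X) : 0 ≤ tailSup G Glim N x :=
  Real.iSup_nonneg fun _ => abs_nonneg _

theorem tailSup_le {x : X} (hx : BddAbove (range fun n => |G n x|)) (N : ℕ) :
    tailSup G Glim N x ≤ (⨆ n, |G n x|) + |Glim x| := by
  have hsup : 0 ≤ ⨆ n, |G n x| := Real.iSup_nonneg fun _ => abs_nonneg _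
  refine Real.iSup_le (fun m => (abs_sub _ _).trans ?_) (by positivity)
  exact add_le_add (le_ciSup hx (m + N)) le_rfl

theorem abs_sub_le_tailSup {x : X} (hx : BddAbove (range fun n => |G n x|)) {m N : ℕ}
    (hNm : N ≤ m) : |G m x - Glim x| ≤ tailSup G Glim N x := by
  have hbdd : BddAbove (range fun m => |G (m + N) x - Glim x|) :=
    ⟨_, forall_mem_range.2 fun m =>
      (abs_sub _ _).trans (add_le_add (le_ciSup hx (m + N)) le_rfl)⟩
  calc |G m x - Glim x| = |G (m - N + N) x - Glim x| := by rw [Nat.sub_add_cancel hNm]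
    _ ≤ tailSup G Glim N x := le_ciSup hbdd (m - N)

theorem tendsto_tailSup {x : X} (hx : Tendsto (G · x) atTop (𝓝 (Glim x))) :
    Tendsto (tailSup G Glim · x) atTop (𝓝 0) := by
  rw [Metric.tendsto_atTop] at hx ⊢
  intro ε hε
  obtain ⟨N₀, hN₀⟩ := hx (ε / 2) (half_pos hε)
  refine ⟨N₀, fun N hN => ?_⟩
  have hle : tailSup G Glim N x ≤ ε / 2 :=
    Real.iSup_le (fun m => (hN₀ (m + N) (by omega)).le) (half_pos hε).le
  rw [Real.dist_eq, sub_zero, abs_of_nonneg (tailSup_nonneg N x)]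
  linarith

theorem tendsto_avg_abs_sub_zero_of_dominated {x : X} {F : ℕ → X → ℝ} {e : ℕ → ℝ}
    (hdom : ∀ k m N, N ≤ m → |G m (T^[k] x) - Glim (T^[k] x)| ≤ F N (T^[k] x))
    (hF : ∀ N k, 0 ≤ F N (T^[k] x))
    (hlim : ∀ N, Tendsto (birkhoffAverage ℝ T (F N) · x) atTop (𝓝 (e N)))
    (hsmall : ∀ ε > 0, ∃ N, e N < ε) :
    Tendsto (fun n : ℕ =>
      (n : ℝ)⁻¹ * ∑ k ∈ Finset.range n, |G (n - k) (T^[k] x) - Glim (T^[k] x)|)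
      atTop (𝓝 0) := by
  have hbound : ∀ N n : ℕ,
      (n : ℝ)⁻¹ * ∑ k ∈ Finset.range n, |G (n - k) (T^[k] x) - Glim (T^[k] x)| ≤
        birkhoffAverage ℝ T (F N) n x + (n : ℝ)⁻¹ *
          (birkhoffSum T (F 0) n x - birkhoffSum T (F 0) (n - N) x) := by
    intro N n
    rw [birkhoffAverage, smul_eq_mul, ← mul_add, birkhoffSum, birkhoffSum, birkhoffSum,
      ← Finset.sum_Ico_eq_sub _ (Nat.sub_le n N)]
    exact mul_le_mul_of_nonneg_left (sum_range_le_of_le_tail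
      (a := fun m k => |G m (T^[k] x) - Glim (T^[k] x)|) (b := fun N k => F N (T^[k] x)) n N
      (fun m k => hdom k m N) (fun m k => hdom k m 0 m.zero_le) (hF N)) (by positivity)
  have hupper : ∀ N, Tendsto (fun n : ℕ => birkhoffAverage ℝ T (F N) n x + (n : ℝ)⁻¹ *
      (birkhoffSum T (F 0) n x - birkhoffSum T (F 0) (n - N) x)) atTop (𝓝 (e N)) := fun N =>
    add_zero (e N) ▸ (hlim N).add (tendsto_inv_mul_sub_sub_of_tendsto N (hlim 0))
  refine tendsto_order.2 ⟨fun a ha => Eventually.of_forall fun n => ha.trans_le ?_,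
    fun ε hε => ?_⟩
  · exact mul_nonneg (by positivity) (Finset.sum_nonneg fun k _ => abs_nonneg _)
  · obtain ⟨N, hN⟩ := hsmall ε hε
    exact ((hupper N).eventually (gt_mem_nhds hN)).mono fun n hn => (hbound N n).trans_lt hn

theorem tendsto_avg_of_tendsto_avg_abs_sub {x : X} {L : ℝ}
    (hD : Tendsto (fun n : ℕ =>
      (n : ℝ)⁻¹ * ∑ k ∈ Finset.range n, |G (n - k) (T^[k] x) - Glim (T^[k] x)|) atTop (𝓝 0))
    (hlim : Tendsto (birkhoffAverage ℝ T Glim · x) atTop (𝓝 L)) :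
    Tendsto (fun n : ℕ => (n : ℝ)⁻¹ * ∑ k ∈ Finset.range n, G (n - k) (T^[k] x))
      atTop (𝓝 L) := by
  have hdiff : Tendsto (fun n : ℕ => (n : ℝ)⁻¹ * ∑ k ∈ Finset.range n, G (n - k) (T^[k] x) -
      birkhoffAverage ℝ T Glim n x) atTop (𝓝 0) := by
    refine squeeze_zero_norm (fun n => ?_) hD
    rw [birkhoffAverage, smul_eq_mul, birkhoffSum, ← mul_sub, ← Finset.sum_sub_distrib,
      norm_mul, norm_inv, Real.norm_natCast, Real.norm_eq_abs]
    exact mul_le_mul_of_nonneg_left (Finset.abs_sum_le_sum_abs _ _) (by positivity)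
  simpa using hdiff.add hlim

variable [MeasurableSpace X] {μ : Measure X}

theorem integrable_of_ae_tendsto_of_integrable_iSup (hG : ∀ n, AEStronglyMeasurable (G n) μ)
    (hae : ∀ᵐ x ∂μ, Tendsto (G · x) atTop (𝓝 (Glim x)))
    (hbdd : ∀ᵐ x ∂μ, BddAbove (range fun n => |G n x|))
    (hstar : Integrable (fun x => ⨆ n, |G n x|) μ) : Integrable Glim μ := by
  refine hstar.mono' (aestronglyMeasurable_of_tendsto_ae atTop hG hae) ?_
  filter_upwards [hae, hbdd] with x hx hxb
  exact le_of_tendsto hx.norm (Eventually.of_forall fun n => le_ciSup hxb n)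

theorem integrable_tailSup (hG : ∀ n, AEStronglyMeasurable (G n) μ)
    (hae : ∀ᵐ x ∂μ, Tendsto (G · x) atTop (𝓝 (Glim x)))
    (hbdd : ∀ᵐ x ∂μ, BddAbove (range fun n => |G n x|))
    (hstar : Integrable (fun x => ⨆ n, |G n x|) μ) (N : ℕ) :
    Integrable (tailSup G Glim N) μ := by
  have hGlim := integrable_of_ae_tendsto_of_integrable_iSup hG hae hbdd hstar
  refine (hstar.add hGlim.abs).mono' (AEMeasurable.iSup fun m =>
    ((hG _).sub hGlim.1).aemeasurable.abs).aestronglyMeasurable ?_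
  filter_upwards [hbdd] with x hx
  rw [Real.norm_of_nonneg (tailSup_nonneg N x)]
  exact tailSup_le hx N

theorem tendsto_integral_tailSup (hG : ∀ n, AEStronglyMeasurable (G n) μ)
    (hae : ∀ᵐ x ∂μ, Tendsto (G · x) atTop (𝓝 (Glim x)))
    (hbdd : ∀ᵐ x ∂μ, BddAbove (range fun n => |G n x|))
    (hstar : Integrable (fun x => ⨆ n, |G n x|) μ) :
    Tendsto (fun N => ∫ x, tailSup G Glim N x ∂μ) atTop (𝓝 0) := by
  have hGlim := integrable_of_ae_tendsto_of_integrable_iSup hG hae hbdd hstar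
  simpa using tendsto_integral_of_dominated_convergence (f := fun _ => (0 : ℝ)) _
    (fun N => (integrable_tailSup hG hae hbdd hstar N).1) (hstar.add hGlim.abs)
    (fun N => by
      filter_upwards [hbdd] with x hx
      rw [Real.norm_of_nonneg (tailSup_nonneg N x)]
      exact tailSup_le hx N)
    (by filter_upwards [hae] with x hx using tendsto_tailSup hx)

theorem ae_exists_lt_of_tendsto_integral_zero [IsFiniteMeasure μ] {f : ℕ → X → ℝ}
    (hf0 : ∀ N, 0 ≤ᵐ[μ] f N) (hfi : ∀ N, Integrable (f N) μ)
    (hlim : Tendsto (fun N => ∫ x, f N x ∂μ) atTop (𝓝 0)) :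
    ∀ᵐ x ∂μ, ∀ ε > 0, ∃ N, f N x < ε := by
  have hlevel : ∀ c : ℝ, 0 < c → ∀ᵐ x ∂μ, ∃ N, f N x < c := by
    intro c hc
    have hsub : ∀ N, {x | ¬∃ N, f N x < c} ⊆ {x | c ≤ f N x} := fun N x hx =>
      not_lt.1 (not_exists.1 hx N)
    have hmarkov : ∀ N, c * μ.real {x | ¬∃ N, f N x < c} ≤ ∫ x, f N x ∂μ := fun N =>
      (mul_le_mul_of_nonneg_left (measureReal_mono (hsub N)) hc.le).trans
        (mul_meas_ge_le_integral_of_nonneg (hf0 N) (hfi N) c)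
    rw [ae_iff, ← measureReal_eq_zero_iff]
    exact le_antisymm (nonpos_of_mul_nonpos_right
      (ge_of_tendsto hlim (Eventually.of_forall hmarkov)) hc) measureReal_nonneg
  filter_upwards [ae_all_iff.2 fun m : ℕ => hlevel (1 / (m + 1)) (by positivity)] with x hx ε hε
  obtain ⟨m, hm⟩ := exists_nat_one_div_lt hε
  obtain ⟨N, hN⟩ := hx m
  exact ⟨N, hN.trans hm⟩

theorem ae_tendsto_avg_abs_sub_zero [IsFiniteMeasure μ] (hT : MeasurePreserving T μ μ)
    (hG : ∀ n, AEStronglyMeasurable (G n) μ)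
    (hae : ∀ᵐ x ∂μ, Tendsto (G · x) atTop (𝓝 (Glim x)))
    (hbdd : ∀ᵐ x ∂μ, BddAbove (range fun n => |G n x|))
    (hstar : Integrable (fun x => ⨆ n, |G n x|) μ) :
    ∀ᵐ x ∂μ, Tendsto (fun n : ℕ =>
      (n : ℝ)⁻¹ * ∑ k ∈ Finset.range n, |G (n - k) (T^[k] x) - Glim (T^[k] x)|)
      atTop (𝓝 0) := by
  have hFi := integrable_tailSup hG hae hbdd hstar
  have horbit : ∀ᵐ x ∂μ, ∀ k, BddAbove (range fun n => |G n (T^[k] x)|) :=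
    ae_all_iff.2 fun k => (hT.iterate k).quasiMeasurePreserving.ae hbdd
  have hlim : ∀ᵐ x ∂μ, ∀ N, Tendsto (birkhoffAverage ℝ T (tailSup G Glim N) · x) atTop
      (𝓝 (μ[tailSup G Glim N | invariantSigma T] x)) :=
    ae_all_iff.2 fun N => ae_tendsto_birkhoffAverage_condExp hT (hFi N)
  have hsmall := ae_exists_lt_of_tendsto_integral_zero
    (f := fun N => μ[tailSup G Glim N | invariantSigma T])
    (fun N => condExp_nonneg (Eventually.of_forall (tailSup_nonneg N)))
    (fun N => integrable_condExp)
    (by simpa only [integral_condExp (invariantSigma_le T)] using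
      tendsto_integral_tailSup hG hae hbdd hstar)
  filter_upwards [horbit, hlim, hsmall] with x hx hlimx hsmallx
  exact tendsto_avg_abs_sub_zero_of_dominated (fun k m N hNm => abs_sub_le_tailSup (hx k) hNm)
    (fun N k => tailSup_nonneg N _) hlimx hsmallx

end Maker

/-- **A strengthened Birkhoff theorem.**
Let `T` be measure preserving on a probability space `(X, ℬ, μ)`, `(G_n) ⊂ L¹(μ)`
with `G_n → G` a.e. and `G* = sup_n |G_n| ∈ L¹(μ)`.  Then
`(1/n) ∑_{k<n} |G_{n-k} - G|∘T^k → 0` a.e., and in particular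
`(1/n) ∑_{k<n} G_{n-k}∘T^k → 𝔼(G|ℐ)` a.e., with `ℐ` the invariant σ-field. -/
theorem strengthened_birkhoff {X : Type*} [MeasurableSpace X]
    (μ : Measure X) [IsProbabilityMeasure μ] (T : X → X)
    (hT : MeasurePreserving T μ μ)
    (G : ℕ → X → ℝ) (Glim : X → ℝ)
    (hint : ∀ n, Integrable (G n) μ)
    (hae : ∀ᵐ x ∂μ, Tendsto (fun n => G n x) atTop (nhds (Glim x)))
    (hbdd : ∀ᵐ x ∂μ, BddAbove (Set.range fun n => |G n x|))
    (hstar : Integrable (fun x => ⨆ n, |G n x|) μ) :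
    (∀ᵐ x ∂μ, Tendsto (fun n : ℕ =>
        (n : ℝ)⁻¹ * ∑ k ∈ Finset.range n, |G (n - k) (T^[k] x) - Glim (T^[k] x)|)
        atTop (nhds 0)) ∧
    (∀ᵐ x ∂μ, Tendsto (fun n : ℕ =>
        (n : ℝ)⁻¹ * ∑ k ∈ Finset.range n, G (n - k) (T^[k] x))
        atTop (nhds ((μ[Glim | invariantSigma T]) x))) := by
  have hG : ∀ n, AEStronglyMeasurable (G n) μ := fun n => (hint n).1
  have hD := ae_tendsto_avg_abs_sub_zero hT hG hae hbdd hstar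
  have hGlim := integrable_of_ae_tendsto_of_integrable_iSup hG hae hbdd hstar
  refine ⟨hD, ?_⟩
  filter_upwards [hD, ae_tendsto_birkhoffAverage_condExp hT hGlim] with x hDx hx
  exact tendsto_avg_of_tendsto_avg_abs_sub hDx hx
end

section
/- (Salem–Zygmund.) There is an absolute constant C such that for every N ≥ 2, every sequence of complex scalars a_1, …, a_N, and a Rademacher sequence (r_n) (independent random variables with P(r_n = 1) = P(r_n = −1) = 1/2), the random trigonometric polynomial Q_N(x) = ∑_{n=1}^N r_n a_n e(nx) satisfies 𝔼(‖Q_N‖_∞) ≤ C (∑_{n=1}^N |a_n|²)^{1/2} √(log N), where ‖·‖_∞ is the supremum norm over x ∈ 𝕋. -/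
/-!
Put `σ = (∑ |a_n|²)^{1/2}`. On the grid `j / N²`, `0 ≤ j < N²`, each of the nine real linear
forms `ε₁ Re Q_N + ε₂ Im Q_N` (`ε ∈ {-1, 0, 1}²`) is a Rademacher sum with real coefficients,
hence sub-Gaussian with variance proxy `2σ²`; comparing `exp (t 𝔼 max)` with
`𝔼 ∑ exp (t Y)` (Jensen) bounds the expected maximum of these `9N²` variables by
`log (9N²) / t + σ² t`. Since `‖z‖ ≤ |Re z| + |Im z|` and `Q_N` is `1`-periodic and
`2π ∑ n |a_n|`-Lipschitz, `‖Q_N‖_∞` exceeds that maximum by at most `2πσ`.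
Taking `t = √(log N) / σ` gives `𝔼 ‖Q_N‖_∞ ≤ 20 σ √(log N)`.
-/

open Real MeasureTheory ProbabilityTheory Finset
open scoped NNReal

lemma norm_exp_mul_I_sub_exp_mul_I_le (θ φ : ℝ) :
    ‖Complex.exp (θ * Complex.I) - Complex.exp (φ * Complex.I)‖ ≤ |θ - φ| := by
  have h : Complex.exp (θ * Complex.I) - Complex.exp (φ * Complex.I)
      = Complex.exp (φ * Complex.I) * (Complex.exp (Complex.I * (θ - φ : ℝ)) - 1) := by
    rw [mul_sub, ← Complex.exp_add, mul_one]
    push_cast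
    ring_nf
  rw [h, norm_mul, Complex.norm_exp_ofReal_mul_I, one_mul]
  exact norm_exp_I_mul_ofReal_sub_one_le

noncomputable def trigPoly (s : Finset ℕ) (b : ℕ → ℂ) (x : ℝ) : ℂ :=
  ∑ n ∈ s, b n * Complex.exp (2 * π * Complex.I * (n * x))

lemma trigPoly_periodic (s : Finset ℕ) (b : ℕ → ℂ) : Function.Periodic (trigPoly s b) 1 := by
  intro x
  refine sum_congr rfl fun n _ => ?_
  have h : 2 * π * Complex.I * (n * ↑(x + 1))
      = 2 * π * Complex.I * (n * x) + n * (2 * π * Complex.I) := by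
    push_cast; ring
  rw [h, Complex.exp_add, Complex.exp_nat_mul_two_pi_mul_I, mul_one]

lemma norm_trigPoly_sub_le (s : Finset ℕ) (b : ℕ → ℂ) (x y : ℝ) :
    ‖trigPoly s b x - trigPoly s b y‖ ≤ (2 * π * ∑ n ∈ s, n * ‖b n‖) * |x - y| := by
  rw [trigPoly, trigPoly, ← sum_sub_distrib, mul_sum, sum_mul]
  refine (norm_sum_le _ _).trans (sum_le_sum fun n _ => ?_)
  have key := norm_exp_mul_I_sub_exp_mul_I_le (2 * π * n * x) (2 * π * n * y)
  push_cast at key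
  rw [← mul_sub, norm_mul]
  calc ‖b n‖ * ‖Complex.exp (2 * π * Complex.I * (n * x))
        - Complex.exp (2 * π * Complex.I * (n * y))‖
    _ ≤ ‖b n‖ * |2 * π * n * x - 2 * π * n * y| := by
        gcongr; convert key using 3 <;> congr 1 <;> ring
    _ = 2 * π * (n * ‖b n‖) * |x - y| := by
        rw [← mul_sub, abs_mul, abs_of_nonneg (by positivity)]; ring

lemma exists_norm_sub_grid_le {E : Type*} [SeminormedAddCommGroup E] {f : ℝ → E}
    (hf : Function.Periodic f 1) {L : ℝ} (hL : ∀ x y, ‖f x - f y‖ ≤ L * |x - y|)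
    (M : ℕ) [NeZero M] (x : ℝ) : ∃ j : Fin M, ‖f x - f (j / M)‖ ≤ L / M := by
  have hL0 : 0 ≤ L := by simpa using (norm_nonneg _).trans (hL 1 0)
  have hM : (0 : ℝ) < M := by exact_mod_cast Nat.pos_of_neZero M
  set u := Int.fract x
  have hj : ⌊u * M⌋₊ < M := by
    rw [Nat.floor_lt (by positivity)]
    nlinarith [Int.fract_lt_one x]
  refine ⟨⟨⌊u * M⌋₊, hj⟩, ?_⟩
  have hfu : f x = f u := by
    have h := hf.sub_int_mul_eq (x := x) ⌊x⌋
    rw [mul_one] at h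
    exact h.symm
  have hdist : |u - ⌊u * M⌋₊ / M| ≤ 1 / M := by
    have h1 : (⌊u * M⌋₊ : ℝ) ≤ u * M := Nat.floor_le (by positivity)
    have h2 : u * M < ⌊u * M⌋₊ + 1 := Nat.lt_floor_add_one _
    rw [show u - ⌊u * M⌋₊ / M = (u * M - ⌊u * M⌋₊) / M by field_simp, abs_div, abs_of_pos hM]
    gcongr
    rw [abs_le]
    constructor <;> linarith
  rw [hfu]
  calc ‖f u - f (⌊u * M⌋₊ / M)‖ ≤ L * |u - ⌊u * M⌋₊ / M| := hL _ _
    _ ≤ L * (1 / M) := by gcongr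
    _ = L / M := by ring

def reImForm (ε : SignType × SignType) (z : ℂ) : ℝ := ε.1 * z.re + ε.2 * z.im

lemma norm_le_iSup_reImForm (z : ℂ) : ‖z‖ ≤ ⨆ ε, reImForm ε z :=
  calc ‖z‖ ≤ |z.re| + |z.im| := Complex.norm_le_abs_re_add_abs_im z
    _ = reImForm (SignType.sign z.re, SignType.sign z.im) z := by
        simp [reImForm, sign_mul_self]
    _ ≤ ⨆ ε, reImForm ε z := le_ciSup (f := fun ε => reImForm ε z) (Finite.bddAbove_range _) _

lemma reImForm_sq_le (ε : SignType × SignType) (z : ℂ) : reImForm ε z ^ 2 ≤ 2 * ‖z‖ ^ 2 := by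
  have h1 : ((ε.1 : ℝ)) ^ 2 ≤ 1 := by rcases ε.1 with _ | _ | _ <;> simp
  have h2 : ((ε.2 : ℝ)) ^ 2 ≤ 1 := by rcases ε.2 with _ | _ | _ <;> simp
  rw [Complex.sq_norm, Complex.normSq_apply, reImForm]
  nlinarith [sq_nonneg (ε.1 * z.re - ε.2 * z.im), mul_le_mul_of_nonneg_right h1 (sq_nonneg z.re),
    mul_le_mul_of_nonneg_right h2 (sq_nonneg z.im)]

lemma reImForm_trigPoly (ε : SignType × SignType) (s : Finset ℕ) (r : ℕ → ℝ) (a : ℕ → ℂ) (x : ℝ) :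
    reImForm ε (trigPoly s (fun n => r n * a n) x)
      = ∑ n ∈ s, reImForm ε (a n * Complex.exp (2 * π * Complex.I * (n * x))) * r n := by
  simp only [reImForm, trigPoly, Complex.re_sum, Complex.im_sum, mul_sum, ← sum_add_distrib]
  refine sum_congr rfl fun n _ => ?_
  rw [mul_assoc, Complex.re_ofReal_mul, Complex.im_ofReal_mul]
  ring

lemma norm_trigPoly_le_iSup_grid (s : Finset ℕ) (b : ℕ → ℂ) (M : ℕ) [NeZero M] (x : ℝ) :
    ‖trigPoly s b x‖ ≤ (⨆ i : Fin M × SignType × SignType, reImForm i.2 (trigPoly s b (i.1 / M)))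
      + 2 * π * (∑ n ∈ s, n * ‖b n‖) / M := by
  obtain ⟨j, hj⟩ := exists_norm_sub_grid_le (trigPoly_periodic s b) (norm_trigPoly_sub_le s b) M x
  have hgrid : ‖trigPoly s b (j / M)‖ ≤ ⨆ i : Fin M × SignType × SignType,
      reImForm i.2 (trigPoly s b (i.1 / M)) :=
    (norm_le_iSup_reImForm _).trans <| ciSup_le fun ε =>
      le_ciSup (f := fun i : Fin M × SignType × SignType => reImForm i.2 (trigPoly s b (i.1 / M)))
        (Finite.bddAbove_range _) (j, ε)
  calc ‖trigPoly s b x‖ ≤ ‖trigPoly s b (j / M)‖ + ‖trigPoly s b x - trigPoly s b (j / M)‖ :=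
        norm_le_norm_add_norm_sub' _ _
    _ ≤ _ := add_le_add hgrid hj

lemma log_nine_mul_sq_le {N : ℕ} (hN : 2 ≤ N) : log (9 * ((N ^ 2 : ℕ) : ℝ)) ≤ 6 * log N := by
  have hN' : (2 : ℝ) ≤ N := by exact_mod_cast hN
  calc log (9 * ((N ^ 2 : ℕ) : ℝ)) ≤ log ((N : ℝ) ^ 6) := by
        refine log_le_log (by positivity) ?_
        push_cast
        nlinarith [pow_le_pow_left₀ (by norm_num) hN' 4, sq_nonneg ((N : ℝ) ^ 2)]
    _ = 6 * log N := by rw [log_pow]; norm_num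

lemma sum_Icc_mul_norm_le (N : ℕ) (a : ℕ → ℂ) :
    ∑ n ∈ Icc 1 N, n * ‖a n‖ ≤ N ^ 2 * √(∑ n ∈ Icc 1 N, ‖a n‖ ^ 2) := by
  have hterm : ∀ n ∈ Icc 1 N, n * ‖a n‖ ≤ N * √(∑ n ∈ Icc 1 N, ‖a n‖ ^ 2) := fun n hn => by
    refine mul_le_mul (by exact_mod_cast (mem_Icc.1 hn).2) ?_ (norm_nonneg _) (Nat.cast_nonneg _)
    rw [← sqrt_sq (norm_nonneg (a n))]
    exact sqrt_le_sqrt (single_le_sum (fun n _ => sq_nonneg ‖a n‖) hn)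
  refine (sum_le_card_nsmul _ _ _ hterm).trans_eq ?_
  simp only [Nat.card_Icc, add_tsub_cancel_right, nsmul_eq_mul]
  ring

section

variable {Ω : Type*} [MeasurableSpace Ω] {P : Measure Ω}

structure IsRademacher (r : Ω → ℝ) (P : Measure Ω) : Prop where
  measurable : Measurable r
  measure_eq_one : P {ω | r ω = 1} = 1 / 2
  measure_eq_neg_one : P {ω | r ω = -1} = 1 / 2

namespace IsRademacher

variable {r : Ω → ℝ}

lemma ae_eq_one_or_eq_neg_one (hr : IsRademacher r P) [IsProbabilityMeasure P] :
    ∀ᵐ ω ∂P, r ω = 1 ∨ r ω = -1 := by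
  have hA : MeasurableSet {ω | r ω = 1} := hr.measurable (measurableSet_singleton _)
  have hB : MeasurableSet {ω | r ω = -1} := hr.measurable (measurableSet_singleton _)
  have hdisj : Disjoint {ω | r ω = 1} {ω | r ω = -1} :=
    Set.disjoint_left.2 fun ω (h1 : r ω = 1) (h2 : r ω = -1) => by linarith
  refine (ae_iff_measure_eq (hA.union hB).nullMeasurableSet).2 ?_
  change P ({ω | r ω = 1} ∪ {ω | r ω = -1}) = P Set.univ
  rw [measure_univ, measure_union hdisj hB, hr.measure_eq_one, hr.measure_eq_neg_one,
    ENNReal.add_halves]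

lemma integral_eq_zero (hr : IsRademacher r P) [IsProbabilityMeasure P] : ∫ ω, r ω ∂P = 0 := by
  have hA : MeasurableSet {ω | r ω = 1} := hr.measurable (measurableSet_singleton _)
  have hB : MeasurableSet {ω | r ω = -1} := hr.measurable (measurableSet_singleton _)
  have hr_eq : r =ᵐ[P] fun ω => {ω | r ω = 1}.indicator 1 ω - {ω | r ω = -1}.indicator 1 ω := by
    filter_upwards [hr.ae_eq_one_or_eq_neg_one] with ω hω
    rcases hω with h | h <;> norm_num [Set.indicator, h]
  rw [integral_congr_ae hr_eq, integral_sub ((integrable_const 1).indicator hA)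
    ((integrable_const 1).indicator hB)]
  simp [integral_indicator_one hA, integral_indicator_one hB, measureReal_def,
    hr.measure_eq_one, hr.measure_eq_neg_one]

lemma hasSubgaussianMGF (hr : IsRademacher r P) [IsProbabilityMeasure P] :
    HasSubgaussianMGF r 1 P := by
  have h := hasSubgaussianMGF_of_mem_Icc_of_integral_eq_zero (a := -1) (b := 1)
    hr.measurable.aemeasurable ?_ hr.integral_eq_zero
  · convert h
    ext
    norm_num
  · filter_upwards [hr.ae_eq_one_or_eq_neg_one] with ω hω
    rcases hω with h | h <;> simp [h]

end IsRademacher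

lemma ProbabilityTheory.HasSubgaussianMGF.mono {X : Ω → ℝ} {c c' : ℝ≥0}
    (h : HasSubgaussianMGF X c P) (hc : c ≤ c') : HasSubgaussianMGF X c' P where
  integrable_exp_mul := h.integrable_exp_mul
  mgf_le t := (h.mgf_le t).trans (exp_le_exp.2 (by gcongr))

lemma ProbabilityTheory.HasSubgaussianMGF.sum_mul_of_iIndepFun {X : ℕ → Ω → ℝ}
    (hindep : iIndepFun X P) (hX : ∀ n, HasSubgaussianMGF (X n) 1 P) (s : Finset ℕ) (c : ℕ → ℝ) :
    HasSubgaussianMGF (fun ω => ∑ n ∈ s, c n * X n ω) (∑ n ∈ s, ‖c n‖₊ ^ 2) P := by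
  refine HasSubgaussianMGF.sum_of_iIndepFun (X := fun n ω => c n * X n ω)
    (hindep.comp (fun n x => c n * x) fun n => measurable_const_mul _) fun n _ => ?_
  convert (hX n).const_mul (c n) using 1
  refine NNReal.eq ?_
  change ‖c n‖ ^ 2 = c n ^ 2 * 1
  simp

lemma integrable_iSup_of_integrable {ι : Type*} [Fintype ι] [Nonempty ι] {Y : ι → Ω → ℝ}
    (hY : ∀ i, Integrable (Y i) P) : Integrable (fun ω => ⨆ i, Y i ω) P := by
  have h := Finset.sup'_induction univ_nonempty Y (p := fun f => Integrable f P)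
    (fun _ hf _ hg => hf.sup hg) fun i _ => hY i
  convert h using 1
  ext ω
  rw [Finset.sup'_apply, Finset.sup'_univ_eq_ciSup]

lemma integral_iSup_le_of_hasSubgaussianMGF [IsProbabilityMeasure P] {ι : Type*} [Fintype ι]
    [Nonempty ι] {Y : ι → Ω → ℝ} {c : ℝ≥0} (hY : ∀ i, HasSubgaussianMGF (Y i) c P) {t : ℝ}
    (ht : 0 < t) :
    ∫ ω, ⨆ i, Y i ω ∂P ≤ log (Fintype.card ι) / t + c * t / 2 := by
  set Z : Ω → ℝ := fun ω => ⨆ i, Y i ω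
  have hZ : Integrable Z P := integrable_iSup_of_integrable fun i => (hY i).integrable
  have hexpY : Integrable (fun ω => ∑ i, exp (t * Y i ω)) P :=
    integrable_finsetSum _ fun i _ => (hY i).integrable_exp_mul t
  have hexp_le : ∀ ω, exp (t * Z ω) ≤ ∑ i, exp (t * Y i ω) := fun ω => by
    obtain ⟨i, hi⟩ := exists_eq_ciSup_of_finite (f := fun i => Y i ω)
    simp only [Z, ← hi]
    exact single_le_sum (f := fun i => exp (t * Y i ω)) (fun i _ => (exp_pos _).le) (mem_univ i)
  have hexpZ : Integrable (fun ω => exp (t * Z ω)) P :=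
    hexpY.mono' (continuous_exp.comp_aestronglyMeasurable (hZ.1.const_mul t))
      (ae_of_all _ fun ω => by simpa [abs_of_pos (exp_pos _)] using hexp_le ω)
  have jensen : exp (t * ∫ ω, Z ω ∂P) ≤ ∫ ω, exp (t * Z ω) ∂P := by
    rw [← integral_const_mul]
    exact convexOn_exp.map_integral_le continuous_exp.continuousOn isClosed_univ
      (ae_of_all _ fun _ => Set.mem_univ _) (hZ.const_mul t) hexpZ
  have hmgf : ∫ ω, exp (t * Z ω) ∂P ≤ Fintype.card ι * exp (c * t ^ 2 / 2) :=
    calc ∫ ω, exp (t * Z ω) ∂P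
      _ ≤ ∫ ω, ∑ i, exp (t * Y i ω) ∂P := integral_mono hexpZ hexpY hexp_le
      _ = ∑ i, mgf (Y i) P t := integral_finsetSum _ fun i _ => (hY i).integrable_exp_mul t
      _ ≤ ∑ _i : ι, exp (c * t ^ 2 / 2) := sum_le_sum fun i _ => (hY i).mgf_le t
      _ = Fintype.card ι * exp (c * t ^ 2 / 2) := by simp
  have hcard : (0 : ℝ) < Fintype.card ι := by exact_mod_cast Fintype.card_pos
  have key : t * ∫ ω, Z ω ∂P ≤ log (Fintype.card ι) + c * t ^ 2 / 2 := by
    rw [← log_exp (c * t ^ 2 / 2), ← log_mul hcard.ne' (exp_pos _).ne',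
      le_log_iff_exp_le (by positivity)]
    exact jensen.trans hmgf
  rw [div_add' _ _ _ ht.ne', le_div_iff₀ ht]
  linarith

lemma hasSubgaussianMGF_reImForm_trigPoly [IsProbabilityMeasure P] {r : ℕ → Ω → ℝ}
    (hr : ∀ n, IsRademacher (r n) P) (hindep : iIndepFun r P) (ε : SignType × SignType)
    (s : Finset ℕ) (a : ℕ → ℂ) (x : ℝ) :
    HasSubgaussianMGF (fun ω => reImForm ε (trigPoly s (fun n => r n ω * a n) x))
      (2 * ∑ n ∈ s, ‖a n‖₊ ^ 2) P := by
  set c : ℕ → ℝ := fun n => reImForm ε (a n * Complex.exp (2 * π * Complex.I * (n * x)))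
  have hc : ∑ n ∈ s, ‖c n‖₊ ^ 2 ≤ 2 * ∑ n ∈ s, ‖a n‖₊ ^ 2 := by
    rw [← NNReal.coe_le_coe]
    push_cast
    rw [mul_sum]
    refine sum_le_sum fun n _ => ?_
    simpa [c, sq_abs, Complex.norm_exp] using
      reImForm_sq_le ε (a n * Complex.exp (2 * π * Complex.I * (n * x)))
  refine ((HasSubgaussianMGF.sum_mul_of_iIndepFun hindep (fun n => (hr n).hasSubgaussianMGF) s
    c).congr (ae_of_all _ fun ω => ?_)).mono hc
  exact (reImForm_trigPoly ε s (fun n => r n ω) a x).symm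

lemma integral_iSup_norm_trigPoly_le [IsProbabilityMeasure P] {r : ℕ → Ω → ℝ}
    (hr : ∀ n, IsRademacher (r n) P) (hindep : iIndepFun r P) (s : Finset ℕ) (a : ℕ → ℂ)
    (M : ℕ) [NeZero M] {t : ℝ} (ht : 0 < t) :
    ∫ ω, ⨆ x : ℝ, ‖trigPoly s (fun n => r n ω * a n) x‖ ∂P
      ≤ log (9 * M) / t + (∑ n ∈ s, ‖a n‖ ^ 2) * t + 2 * π * (∑ n ∈ s, n * ‖a n‖) / M := by
  set Y : Fin M × SignType × SignType → Ω → ℝ :=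
    fun i ω => reImForm i.2 (trigPoly s (fun n => r n ω * a n) (i.1 / M))
  have hY (i : Fin M × SignType × SignType) : HasSubgaussianMGF (Y i) _ P :=
    hasSubgaussianMGF_reImForm_trigPoly hr hindep i.2 s a (i.1 / M)
  have hcard : Fintype.card (Fin M × SignType × SignType) = 9 * M := by
    simp only [Fintype.card_prod, Fintype.card_fin, show Fintype.card SignType = 3 from rfl]
    ring
  have hmax := integral_iSup_le_of_hasSubgaussianMGF hY ht
  rw [hcard] at hmax
  push_cast at hmax
  set D := 2 * π * (∑ n ∈ s, n * ‖a n‖) / M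
  have hpoint : ∀ᵐ ω ∂P, ⨆ x : ℝ, ‖trigPoly s (fun n => r n ω * a n) x‖ ≤ (⨆ i, Y i ω) + D := by
    filter_upwards [ae_all_iff.2 fun n => (hr n).ae_eq_one_or_eq_neg_one] with ω hω
    have hnorm : ∀ n, ‖(r n ω : ℂ) * a n‖ = ‖a n‖ := fun n => by
      rcases hω n with h | h <;> simp [h]
    refine ciSup_le fun x => (norm_trigPoly_le_iSup_grid s _ M x).trans_eq ?_
    simp only [hnorm, Y, D]
  have hZ := integrable_iSup_of_integrable fun i => (hY i).integrable
  calc ∫ ω, ⨆ x : ℝ, ‖trigPoly s (fun n => r n ω * a n) x‖ ∂P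
    _ ≤ ∫ ω, ((⨆ i, Y i ω) + D) ∂P := integral_mono_of_nonneg
        (ae_of_all _ fun ω => Real.iSup_nonneg fun x => norm_nonneg _)
        (hZ.add (integrable_const D)) hpoint
    _ = ∫ ω, ⨆ i, Y i ω ∂P + D := by simp [integral_add hZ (integrable_const D)]
    _ ≤ _ := by linarith

lemma integral_iSup_norm_trigPoly_Icc_le [IsProbabilityMeasure P] {r : ℕ → Ω → ℝ}
    (hr : ∀ n, IsRademacher (r n) P) (hindep : iIndepFun r P) {N : ℕ} (hN : 2 ≤ N) (a : ℕ → ℂ)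
    (hS : 0 < ∑ n ∈ Icc 1 N, ‖a n‖ ^ 2) :
    ∫ ω, ⨆ x : ℝ, ‖trigPoly (Icc 1 N) (fun n => r n ω * a n) x‖ ∂P
      ≤ 20 * √(∑ n ∈ Icc 1 N, ‖a n‖ ^ 2) * √(log N) := by
  set S := ∑ n ∈ Icc 1 N, ‖a n‖ ^ 2
  set σ := √S
  set w := √(log N)
  have : NeZero (N ^ 2) := ⟨by positivity⟩
  have hσ : 0 < σ := sqrt_pos.2 hS
  have hlogN : 1 / 4 ≤ log N :=
    (by linarith [log_two_gt_d9] : (1 : ℝ) / 4 ≤ log 2).trans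
      (log_le_log (by norm_num) (by exact_mod_cast hN))
  have hw : 1 / 2 ≤ w := (le_sqrt' (by norm_num)).2 (by linarith)
  have hlog : log (9 * ((N ^ 2 : ℕ) : ℝ)) / (w / σ) ≤ 6 * σ * w := by
    rw [div_le_iff₀ (by positivity)]
    calc log (9 * ((N ^ 2 : ℕ) : ℝ)) ≤ 6 * w ^ 2 := by
          rw [sq_sqrt (by linarith)]; exact log_nine_mul_sq_le hN
      _ = 6 * σ * w * (w / σ) := by field_simp
  have hSt : S * (w / σ) = σ * w := by
    have hσS : σ ^ 2 = S := sq_sqrt hS.le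
    rw [← hσS]
    field_simp
  have hD : 2 * π * (∑ n ∈ Icc 1 N, n * ‖a n‖) / ((N ^ 2 : ℕ) : ℝ) ≤ 2 * π * σ := by
    rw [div_le_iff₀ (by positivity)]
    push_cast
    nlinarith [sum_Icc_mul_norm_le N a, pi_pos]
  calc ∫ ω, ⨆ x : ℝ, ‖trigPoly (Icc 1 N) (fun n => r n ω * a n) x‖ ∂P
    _ ≤ log (9 * ((N ^ 2 : ℕ) : ℝ)) / (w / σ) + S * (w / σ)
        + 2 * π * (∑ n ∈ Icc 1 N, n * ‖a n‖) / ((N ^ 2 : ℕ) : ℝ) :=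
      integral_iSup_norm_trigPoly_le hr hindep _ a _ (by positivity)
    _ ≤ 6 * σ * w + σ * w + 2 * π * σ := by rw [hSt]; gcongr
    _ ≤ 20 * σ * w := by
      nlinarith [mul_le_mul_of_nonneg_left hw (mul_nonneg pi_pos.le hσ.le), pi_lt_d2,
        mul_pos hσ (lt_of_lt_of_le (by norm_num) hw)]

end

/-- **Salem–Zygmund inequality.**
There is an absolute constant `C` such that for every Rademacher sequence `(r_n)`
(independent, `P(r_n = 1) = P(r_n = −1) = 1/2`), every `N ≥ 2` and all complex
scalars `a_1, …, a_N`, the random polynomial `Q_N(x) = ∑_{n=1}^N r_n a_n e(nx)`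
satisfies `𝔼 ‖Q_N‖_∞ ≤ C (∑ |a_n|²)^{1/2} √(log N)`. -/
theorem salem_zygmund :
    ∃ C : ℝ, 0 < C ∧
      ∀ (Ω : Type) (_ : MeasurableSpace Ω) (P : Measure Ω),
        IsProbabilityMeasure P →
        ∀ r : ℕ → Ω → ℝ, (∀ n, Measurable (r n)) →
          iIndepFun r P →
          (∀ n, P {ω | r n ω = 1} = 1 / 2) →
          (∀ n, P {ω | r n ω = -1} = 1 / 2) →
          ∀ N : ℕ, 2 ≤ N → ∀ a : ℕ → ℂ,
            (∫ ω, (⨆ x : ℝ, ‖∑ n ∈ Finset.Icc 1 N,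
                (r n ω : ℂ) * a n * Complex.exp (2 * Real.pi * Complex.I * (n * x))‖) ∂P)
              ≤ C * Real.sqrt (∑ n ∈ Finset.Icc 1 N, ‖a n‖ ^ 2) * Real.sqrt (Real.log N) := by
  refine ⟨20, by norm_num, fun Ω _ P _ r hmeas hindep h1 h2 N hN a => ?_⟩
  set S := ∑ n ∈ Icc 1 N, ‖a n‖ ^ 2
  rcases (sum_nonneg fun n _ => sq_nonneg ‖a n‖ : 0 ≤ S).eq_or_lt with hS | hS
  · have ha : ∀ n ∈ Icc 1 N, a n = 0 := fun n hn => by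
      simpa using (sum_eq_zero_iff_of_nonneg fun n _ => sq_nonneg ‖a n‖).1 hS.symm n hn
    have hQ (ω : Ω) (x : ℝ) : ∑ n ∈ Icc 1 N,
        (r n ω : ℂ) * a n * Complex.exp (2 * π * Complex.I * (n * x)) = 0 :=
      sum_eq_zero fun n hn => by rw [ha n hn, mul_zero, zero_mul]
    simp only [hQ, norm_zero, ciSup_const, integral_zero]
    positivity
  simpa only [trigPoly] using
    integral_iSup_norm_trigPoly_Icc_le (fun n => ⟨hmeas n, h1 n, h2 n⟩) hindep hN a hS
end

section
/- There is an absolute constant C such that for every N ≥ 2 and every finite sequence (X_n)_{1≤n≤N} of centered, square-integrable, complex-valued, independent random variables, the random trigonometric polynomial P_N(x) = ∑_{n=1}^N X_n e(nx) satisfies 𝔼(‖P_N‖_∞) ≤ C (∑_{n=1}^N V(X_n))^{1/2} √(log N), where V(X_n) denotes the variance 𝔼|X_n|² and ‖·‖_∞ is the supremum norm over 𝕋. -/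
/-!
Truncate each coefficient at level `1/(2l)` and recentre it. The recentred truncations `Yₙ` are
bounded by `1/l`, so for `|t| ≤ l` and `‖ζ‖ ≤ 1` the elementary bound `eᵘ ≤ 1 + u + u²` on
`[-1, 1]` gives `𝔼 exp (t Re (ζ Yₙ)) ≤ exp (t² V(Xₙ))`, and independence turns this into
`exp (t² ∑ V(Xₙ))` for the real and imaginary parts of `∑ Yₙ e(nx)`. Bounding a maximum by the
smooth maximum `l⁻¹ log ∑ (e^{lz} + e^{-lz})` and applying Jensen to `log`, the expected maximum
over the `N²` grid points `j/N²` is at most `l⁻¹ log (2N²) + l ∑ V(Xₙ)`; passing from the grid to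
all of `𝕋` costs `2π/l`, and the truncated-off parts have mean at most `4l ∑ V(Xₙ)`. Optimising
over `l` gives `O(√(∑ V(Xₙ) log N))`.
-/

open Real Filter MeasureTheory ProbabilityTheory

lemma Real.exp_le_one_add_add_sq {u : ℝ} (hu : |u| ≤ 1) : exp u ≤ 1 + u + u ^ 2 := by
  have h := abs_le.1 (Real.exp_bound hu (n := 2) (by norm_num))
  norm_num [Finset.sum_range_succ, Nat.factorial] at h
  nlinarith [sq_abs u]

lemma le_two_mul_sqrt_mul_of_forall_pos {A a b : ℝ} (ha : 0 < a) (hb : 0 ≤ b)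
    (h : ∀ l > 0, A ≤ a / l + b * l) : A ≤ 2 * √(a * b) := by
  rcases hb.eq_or_lt with rfl | hb
  · refine le_of_forall_pos_le_add fun ε hε ↦ ?_
    simpa [div_div_eq_mul_div, ha.ne'] using h (a / ε) (div_pos ha hε)
  · refine (h _ (sqrt_pos.2 (div_pos ha hb))).trans_eq ?_
    rw [sqrt_div ha.le, sqrt_mul ha.le]
    have := sq_sqrt ha.le
    have := sq_sqrt hb.le
    field_simp
    nlinarith [sqrt_pos.2 ha, sqrt_pos.2 hb]

section Mgf

variable {Ω : Type*} [MeasurableSpace Ω] {P : Measure Ω} [IsProbabilityMeasure P]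

lemma mgf_le_exp_sq_mul_integral_sq {w : Ω → ℝ} {K t : ℝ} (hw : AEStronglyMeasurable w P)
    (hK : ∀ ω, |w ω| ≤ K) (ht : |t| * K ≤ 1) (hw0 : ∫ ω, w ω ∂P = 0) :
    mgf w P t ≤ exp (t ^ 2 * ∫ ω, w ω ^ 2 ∂P) := by
  have hw1 : Integrable w P := .of_bound hw K (.of_forall hK)
  have hw2 : Integrable (fun ω ↦ w ω ^ 2) P := .of_bound (hw.pow 2) (K ^ 2) <| .of_forall fun ω ↦ by
    rw [norm_pow, norm_eq_abs]
    exact pow_le_pow_left₀ (abs_nonneg _) (hK ω) 2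
  have htw (ω : Ω) : |t * w ω| ≤ 1 := by
    rw [abs_mul]
    exact (mul_le_mul_of_nonneg_left (hK ω) (abs_nonneg t)).trans ht
  have hexp : Integrable (fun ω ↦ exp (t * w ω)) P := .of_bound (by fun_prop) (exp 1) <|
    .of_forall fun ω ↦ by
      rw [norm_eq_abs, abs_exp]
      exact exp_le_exp.2 ((le_abs_self _).trans (htw ω))
  have hlin : Integrable (fun ω ↦ 1 + t * w ω) P := (integrable_const 1).add (hw1.const_mul t)
  calc mgf w P t ≤ ∫ ω, (1 + t * w ω + t ^ 2 * w ω ^ 2) ∂P :=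
        integral_mono hexp (hlin.add (hw2.const_mul _)) fun ω ↦ by
          simpa [mul_pow] using exp_le_one_add_add_sq (htw ω)
    _ = 1 + t ^ 2 * ∫ ω, w ω ^ 2 ∂P := by
        rw [integral_add hlin (hw2.const_mul _),
          integral_add (integrable_const 1) (hw1.const_mul t), integral_const_mul,
          integral_const_mul, hw0]
        simp
    _ ≤ exp (t ^ 2 * ∫ ω, w ω ^ 2 ∂P) := by
        linarith [add_one_le_exp (t ^ 2 * ∫ ω, w ω ^ 2 ∂P)]

end Mgf

section Truncation

variable {E : Type*} [NormedAddCommGroup E]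

noncomputable def truncate (T : ℝ) (z : E) : E := if ‖z‖ ≤ T then z else 0

lemma norm_truncate_le_norm (T : ℝ) (z : E) : ‖truncate T z‖ ≤ ‖z‖ := by
  unfold truncate; split_ifs <;> simp

lemma norm_truncate_le {T : ℝ} (hT : 0 ≤ T) (z : E) : ‖truncate T z‖ ≤ T := by
  unfold truncate; split_ifs with h <;> simp [h, hT]

lemma norm_sub_truncate_le {T : ℝ} (hT : 0 < T) (z : E) :
    ‖z - truncate T z‖ ≤ ‖z‖ ^ 2 / T := by
  unfold truncate
  split_ifs with h
  · simp only [sub_self, norm_zero]; positivity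
  · rw [sub_zero, le_div_iff₀ hT]; nlinarith [norm_nonneg z]

lemma measurable_truncate [MeasurableSpace E] [OpensMeasurableSpace E] (T : ℝ) :
    Measurable (truncate (E := E) T) :=
  Measurable.ite (measurableSet_le measurable_norm measurable_const) measurable_id
    measurable_const

end Truncation

section CenteredTruncation

variable {Ω : Type*} [MeasurableSpace Ω] {P : Measure Ω} {X : Ω → ℂ} {T : ℝ}

noncomputable def centeredTruncation (P : Measure Ω) (T : ℝ) (X : Ω → ℂ) (ω : Ω) : ℂ :=
  truncate T (X ω) - ∫ ω', truncate T (X ω') ∂P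

lemma integrable_truncate_comp [IsFiniteMeasure P] (hX : Measurable X) (hT : 0 ≤ T) :
    Integrable (fun ω ↦ truncate T (X ω)) P :=
  .of_bound ((measurable_truncate T).comp hX).aestronglyMeasurable T
    (.of_forall fun _ ↦ norm_truncate_le hT _)

lemma measurable_centeredTruncation (hX : Measurable X) :
    Measurable (centeredTruncation P T X) :=
  ((measurable_truncate T).comp hX).sub_const _

lemma norm_centeredTruncation_le [IsProbabilityMeasure P] (hT : 0 ≤ T) (ω : Ω) :
    ‖centeredTruncation P T X ω‖ ≤ 2 * T := by
  have hmean : ‖∫ ω', truncate T (X ω') ∂P‖ ≤ T := by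
    simpa using norm_integral_le_of_norm_le_const (μ := P)
      (.of_forall fun ω' ↦ norm_truncate_le hT (X ω'))
  rw [centeredTruncation]
  linarith [norm_sub_le (truncate T (X ω)) (∫ ω', truncate T (X ω') ∂P),
    norm_truncate_le hT (X ω)]

lemma integral_norm_sub_centeredTruncation_le [IsProbabilityMeasure P] (hX : Measurable X)
    (hX2 : MemLp X 2 P) (hX0 : ∫ ω, X ω ∂P = 0) (hT : 0 < T) :
    ∫ ω, ‖X ω - centeredTruncation P T X ω‖ ∂P ≤ 2 * (∫ ω, ‖X ω‖ ^ 2 ∂P) / T := by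
  have hX1 : Integrable X P := hX2.integrable one_le_two
  have htr := integrable_truncate_comp (P := P) hX hT.le
  have hcut : Integrable (fun ω ↦ ‖X ω - truncate T (X ω)‖) P := (hX1.sub htr).norm
  have hcut_le : ∫ ω, ‖X ω - truncate T (X ω)‖ ∂P ≤ (∫ ω, ‖X ω‖ ^ 2 ∂P) / T := by
    rw [← integral_div]
    exact integral_mono hcut ((hX2.integrable_norm_pow two_ne_zero).div_const T)
      fun ω ↦ norm_sub_truncate_le hT (X ω)
  -- `X` is centred, so the mean of its truncation is minus the mean of the part cut off
  have hmean : ‖∫ ω, truncate T (X ω) ∂P‖ ≤ ∫ ω, ‖X ω - truncate T (X ω)‖ ∂P := by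
    rw [← norm_neg, ← zero_sub, ← hX0, ← integral_sub hX1 htr]
    exact norm_integral_le_integral_norm _
  calc ∫ ω, ‖X ω - centeredTruncation P T X ω‖ ∂P
      ≤ ∫ ω, (‖X ω - truncate T (X ω)‖ + ‖∫ ω', truncate T (X ω') ∂P‖) ∂P :=
        integral_mono (hX1.sub (htr.sub (integrable_const _))).norm
          (hcut.add (integrable_const _)) fun ω ↦ by
            rw [centeredTruncation, sub_sub_eq_add_sub, add_sub_right_comm]
            exact norm_add_le _ _
    _ = ∫ ω, ‖X ω - truncate T (X ω)‖ ∂P + ‖∫ ω', truncate T (X ω') ∂P‖ := by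
        rw [integral_add hcut (integrable_const _), integral_const]; simp
    _ ≤ 2 * (∫ ω, ‖X ω‖ ^ 2 ∂P) / T := by rw [mul_div_assoc]; linarith

lemma mgf_re_centeredTruncation_mul_le [IsProbabilityMeasure P] (hX : Measurable X)
    (hX2 : MemLp X 2 P) (hT : 0 ≤ T) {ζ : ℂ} (hζ : ‖ζ‖ ≤ 1) {t : ℝ} (ht : |t| * (2 * T) ≤ 1) :
    mgf (fun ω ↦ (centeredTruncation P T X ω * ζ).re) P t
      ≤ exp (t ^ 2 * ∫ ω, ‖X ω‖ ^ 2 ∂P) := by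
  set a : Ω → ℝ := fun ω ↦ (truncate T (X ω) * ζ).re
  have ha : Measurable a :=
    Complex.measurable_re.comp (((measurable_truncate T).comp hX).mul_const ζ)
  have ha_le (ω : Ω) : |a ω| ≤ ‖X ω‖ ⊓ T := by
    refine (Complex.abs_re_le_norm _).trans ?_
    rw [norm_mul]
    exact (mul_le_of_le_one_right (norm_nonneg _) hζ).trans
      (le_inf (norm_truncate_le_norm T _) (norm_truncate_le hT _))
  have hw (ω : Ω) : (centeredTruncation P T X ω * ζ).re = a ω - ∫ ω', a ω' ∂P := by
    have hmean : ∫ ω', a ω' ∂P = ((∫ ω', truncate T (X ω') ∂P) * ζ).re := by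
      rw [← integral_mul_const]
      exact integral_re ((integrable_truncate_comp hX hT).mul_const ζ)
    rw [hmean, centeredTruncation, sub_mul, Complex.sub_re]
  have hK (ω : Ω) : |(centeredTruncation P T X ω * ζ).re| ≤ 2 * T := by
    refine (Complex.abs_re_le_norm _).trans ?_
    rw [norm_mul]
    exact (mul_le_of_le_one_right (norm_nonneg _) hζ).trans (norm_centeredTruncation_le hT ω)
  have hw0 : ∫ ω, (centeredTruncation P T X ω * ζ).re ∂P = 0 := by
    simp_rw [hw]
    rw [integral_sub (.of_bound ha.aestronglyMeasurable T (.of_forall fun ω ↦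
      (ha_le ω).trans inf_le_right)) (integrable_const _), integral_const]
    simp
  refine (mgf_le_exp_sq_mul_integral_sq (by simp_rw [hw]; fun_prop) hK ht hw0).trans
    (exp_le_exp.2 (mul_le_mul_of_nonneg_left ?_ (sq_nonneg t)))
  -- the second moment of the recentred variable is the variance of `a`, at most `𝔼 a²`
  simp_rw [hw]
  rw [← variance_eq_integral ha.aemeasurable]
  refine (variance_le_expectation_sq ha.aestronglyMeasurable).trans
    (integral_mono_of_nonneg (.of_forall fun _ ↦ sq_nonneg _)
      (hX2.integrable_norm_pow two_ne_zero) (.of_forall fun ω ↦ ?_))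
  simpa only [Pi.pow_apply, sq_abs] using
    pow_le_pow_left₀ (abs_nonneg _) ((ha_le ω).trans inf_le_left) 2

lemma mgf_re_sum_centeredTruncation_mul_le {ι : Type*} {X : ι → Ω → ℂ}
    (hX : ∀ i, Measurable (X i)) (hindep : iIndepFun X P) (hX2 : ∀ i, MemLp (X i) 2 P)
    (hT : 0 ≤ T) (s : Finset ι) {ζ : ι → ℂ} (hζ : ∀ i, ‖ζ i‖ ≤ 1) {t : ℝ}
    (ht : |t| * (2 * T) ≤ 1) :
    mgf (fun ω ↦ (∑ i ∈ s, centeredTruncation P T (X i) ω * ζ i).re) P t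
      ≤ exp (t ^ 2 * ∑ i ∈ s, ∫ ω, ‖X i ω‖ ^ 2 ∂P) := by
  have := hindep.isProbabilityMeasure
  let g (i : ι) (z : ℂ) : ℝ := ((truncate T z - ∫ ω, truncate T (X i ω) ∂P) * ζ i).re
  have hg (i : ι) : Measurable (g i) :=
    Complex.measurable_re.comp (((measurable_truncate T).sub_const _).mul_const _)
  have hsum : (fun ω ↦ (∑ i ∈ s, centeredTruncation P T (X i) ω * ζ i).re)
      = ∑ i ∈ s, g i ∘ X i := by
    ext ω
    simp only [Complex.re_sum, Finset.sum_apply, Function.comp_apply, centeredTruncation, g]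
  rw [hsum, (hindep.comp g hg).mgf_sum (fun i ↦ (hg i).comp (hX i)), Finset.mul_sum, exp_sum]
  exact Finset.prod_le_prod (fun _ _ ↦ mgf_nonneg)
    fun i _ ↦ mgf_re_centeredTruncation_mul_le (hX i) (hX2 i) hT (hζ i) ht

lemma integrable_sum_norm_sub_centeredTruncation_and_integral_le [IsProbabilityMeasure P]
    {ι : Type*} {X : ι → Ω → ℂ} (hX : ∀ i, Measurable (X i)) (hX2 : ∀ i, MemLp (X i) 2 P)
    (hX0 : ∀ i, ∫ ω, X i ω ∂P = 0) {l : ℝ} (hl : 0 < l) (s : Finset ι) :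
    Integrable (fun ω ↦ ∑ i ∈ s, ‖X i ω - centeredTruncation P (2 * l)⁻¹ (X i) ω‖) P ∧
      ∫ ω, ∑ i ∈ s, ‖X i ω - centeredTruncation P (2 * l)⁻¹ (X i) ω‖ ∂P
        ≤ 4 * l * ∑ i ∈ s, ∫ ω, ‖X i ω‖ ^ 2 ∂P := by
  have hint (i : ι) :
      Integrable (fun ω ↦ ‖X i ω - centeredTruncation P (2 * l)⁻¹ (X i) ω‖) P :=
    ((hX2 i).integrable one_le_two |>.sub
      ((integrable_truncate_comp (hX i) (by positivity)).sub (integrable_const _))).norm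
  refine ⟨integrable_finsetSum _ fun i _ ↦ hint i, ?_⟩
  rw [integral_finsetSum _ fun i _ ↦ hint i, Finset.mul_sum]
  refine Finset.sum_le_sum fun i _ ↦
    (integral_norm_sub_centeredTruncation_le (hX i) (hX2 i) (hX0 i) (by positivity)).trans_eq ?_
  field_simp
  ring

end CenteredTruncation

section SmoothMax

variable {ι : Type*}

noncomputable def smoothMaxAbs (l : ℝ) (J : Finset ι) (z : ι → ℝ) : ℝ :=
  l⁻¹ * log (∑ i ∈ J, (exp (l * z i) + exp (-l * z i)))

lemma one_le_sum_exp_add_exp_neg {J : Finset ι} (hJ : J.Nonempty) (l : ℝ) (z : ι → ℝ) :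
    1 ≤ ∑ i ∈ J, (exp (l * z i) + exp (-l * z i)) := by
  obtain ⟨j, hj⟩ := hJ
  calc (1 : ℝ) ≤ exp (l * z j) + exp (-l * z j) := by
        rw [neg_mul]; linarith [add_one_le_exp (l * z j), add_one_le_exp (-(l * z j))]
    _ ≤ _ := Finset.single_le_sum (f := fun i ↦ exp (l * z i) + exp (-l * z i))
        (fun _ _ ↦ by positivity) hj

lemma abs_le_smoothMaxAbs {l : ℝ} (hl : 0 < l) {J : Finset ι} (z : ι → ℝ) {j : ι}
    (hj : j ∈ J) : |z j| ≤ smoothMaxAbs l J z := by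
  have hexp : exp (l * |z j|) ≤ ∑ i ∈ J, (exp (l * z i) + exp (-l * z i)) := by
    refine le_trans ?_ (Finset.single_le_sum (f := fun i ↦ exp (l * z i) + exp (-l * z i))
      (fun _ _ ↦ by positivity) hj)
    rcases abs_cases (z j) with ⟨h, _⟩ | ⟨h, _⟩ <;> rw [h] <;>
      simp only [mul_neg, neg_mul, le_add_iff_nonneg_left, le_add_iff_nonneg_right] <;>
      positivity
  rw [smoothMaxAbs, le_inv_mul_iff₀ hl, ← log_exp (l * |z j|)]
  exact log_le_log (exp_pos _) hexp

variable {Ω : Type*} [MeasurableSpace Ω] {P : Measure Ω}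

lemma integrable_smoothMaxAbs_and_integral_le [IsProbabilityMeasure P] {Z : ι → Ω → ℝ}
    {J : Finset ι} (hJ : J.Nonempty) {l K B : ℝ} (hl : 0 < l) (hZ : ∀ i, Measurable (Z i))
    (hK : ∀ i ω, |Z i ω| ≤ K) (hB : ∀ i ∈ J, mgf (Z i) P l ≤ B ∧ mgf (Z i) P (-l) ≤ B) :
    Integrable (fun ω ↦ smoothMaxAbs l J (Z · ω)) P ∧
      ∫ ω, smoothMaxAbs l J (Z · ω) ∂P ≤ l⁻¹ * log (2 * J.card * B) := by
  have hexp (t : ℝ) (i : ι) : Integrable (fun ω ↦ exp (t * Z i ω)) P :=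
    .of_bound (by fun_prop) (exp (|t| * K)) <| .of_forall fun ω ↦ by
      rw [norm_eq_abs, abs_exp, exp_le_exp]
      refine (le_abs_self _).trans ?_
      rw [abs_mul]
      exact mul_le_mul_of_nonneg_left (hK i ω) (abs_nonneg t)
  have hterm (i : ι) : Integrable (fun ω ↦ exp (l * Z i ω) + exp (-l * Z i ω)) P :=
    (hexp l i).add (hexp (-l) i)
  set U : Ω → ℝ := fun ω ↦ ∑ i ∈ J, (exp (l * Z i ω) + exp (-l * Z i ω))
  have hU1 (ω : Ω) : 1 ≤ U ω := one_le_sum_exp_add_exp_neg hJ l (Z · ω)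
  have hU : Integrable U P := integrable_finsetSum _ fun i _ ↦ hterm i
  have hlogU : Integrable (fun ω ↦ log (U ω)) P :=
    hU.mono' (by fun_prop : Measurable U).log.aestronglyMeasurable <| .of_forall fun ω ↦ by
      rw [norm_eq_abs, abs_of_nonneg (log_nonneg (hU1 ω))]
      linarith [log_le_sub_one_of_pos (one_pos.trans_le (hU1 ω))]
  have hU_le : ∫ ω, U ω ∂P ≤ 2 * J.card * B := by
    rw [integral_finsetSum _ fun i _ ↦ hterm i]
    calc ∑ i ∈ J, ∫ ω, (exp (l * Z i ω) + exp (-l * Z i ω)) ∂P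
        ≤ ∑ _i ∈ J, 2 * B := Finset.sum_le_sum fun i hi ↦ by
          rw [integral_add (hexp l i) (hexp (-l) i)]
          exact (add_le_add (hB i hi).1 (hB i hi).2).trans_eq (two_mul B).symm
      _ = 2 * J.card * B := by rw [Finset.sum_const, nsmul_eq_mul]; ring
  have hjensen : ∫ ω, log (U ω) ∂P ≤ log (∫ ω, U ω ∂P) :=
    (strictConcaveOn_log_Ioi.concaveOn.subset (Set.Ici_subset_Ioi.2 one_pos)
      (convex_Ici 1)).le_map_integral
      (continuousOn_log.mono fun x hx ↦ (one_pos.trans_le hx).ne') isClosed_Ici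
      (.of_forall hU1) hU hlogU
  have hU_pos : 0 < ∫ ω, U ω ∂P := one_pos.trans_le <| by
    simpa using integral_mono (integrable_const 1) hU hU1
  refine ⟨hlogU.const_mul l⁻¹, ?_⟩
  simp only [smoothMaxAbs]
  rw [integral_const_mul]
  exact mul_le_mul_of_nonneg_left (hjensen.trans (log_le_log hU_pos hU_le))
    (inv_nonneg.2 hl.le)

lemma integrable_smoothMaxAbs_re_sum_centeredTruncation_and_integral_le {κ : Type*}
    {X : κ → Ω → ℂ} (hX : ∀ k, Measurable (X k)) (hindep : iIndepFun X P)
    (hX2 : ∀ k, MemLp (X k) 2 P) {l : ℝ} (hl : 0 < l) (s : Finset κ) {J : Finset ι}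
    (hJ : J.Nonempty) {ζ : ι → κ → ℂ} (hζ : ∀ j k, ‖ζ j k‖ ≤ 1) :
    Integrable (fun ω ↦ smoothMaxAbs l J
        fun j ↦ (∑ k ∈ s, centeredTruncation P (2 * l)⁻¹ (X k) ω * ζ j k).re) P ∧
      ∫ ω, smoothMaxAbs l J
          (fun j ↦ (∑ k ∈ s, centeredTruncation P (2 * l)⁻¹ (X k) ω * ζ j k).re) ∂P
        ≤ l⁻¹ * log (2 * J.card) + l * ∑ k ∈ s, ∫ ω, ‖X k ω‖ ^ 2 ∂P := by
  have := hindep.isProbabilityMeasure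
  set T := (2 * l)⁻¹
  have hT : 0 ≤ T := by positivity
  have hlT : |l| * (2 * T) ≤ 1 := le_of_eq <| by
    rw [abs_of_pos hl, ← mul_assoc, mul_comm l]
    exact mul_inv_cancel₀ (by positivity)
  have hbound (j : ι) (ω : Ω) :
      |(∑ k ∈ s, centeredTruncation P T (X k) ω * ζ j k).re| ≤ ∑ k ∈ s, 2 * T := by
    refine (Complex.abs_re_le_norm _).trans <| (norm_sum_le _ _).trans <|
      Finset.sum_le_sum fun k _ ↦ ?_
    rw [norm_mul]
    exact (mul_le_of_le_one_right (norm_nonneg _) (hζ j k)).trans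
      (norm_centeredTruncation_le hT ω)
  have hY (k : κ) := measurable_centeredTruncation (P := P) (T := T) (hX k)
  obtain ⟨hint, hle⟩ := integrable_smoothMaxAbs_and_integral_le (P := P) hJ hl
    (fun j ↦ by fun_prop) hbound fun j _ ↦
      ⟨mgf_re_sum_centeredTruncation_mul_le hX hindep hX2 hT s (hζ j) hlT,
        (mgf_re_sum_centeredTruncation_mul_le hX hindep hX2 hT s (hζ j) (t := -l)
          (by rwa [abs_neg])).trans_eq (by rw [neg_sq])⟩
  refine ⟨hint, hle.trans_eq ?_⟩
  rw [log_mul (by simp [hJ.ne_empty]) (exp_pos _).ne', log_exp]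
  field_simp

end SmoothMax

section FourierMode

noncomputable def fourierMode (n : ℕ) (x : ℝ) : ℂ := Complex.exp (2 * π * Complex.I * (n * x))

lemma fourierMode_eq_exp_mul_I (n : ℕ) (x : ℝ) :
    fourierMode n x = Complex.exp (↑(2 * π * n * x) * Complex.I) := by
  rw [fourierMode]; push_cast; ring_nf

@[simp]
lemma norm_fourierMode (n : ℕ) (x : ℝ) : ‖fourierMode n x‖ = 1 := by
  rw [fourierMode_eq_exp_mul_I, Complex.norm_exp_ofReal_mul_I]

lemma fourierMode_fract (n : ℕ) (x : ℝ) : fourierMode n (Int.fract x) = fourierMode n x := by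
  have h : 2 * (π : ℂ) * Complex.I * (n * ↑(Int.fract x))
      = 2 * π * Complex.I * (n * x) - (n * ⌊x⌋ : ℤ) * (2 * π * Complex.I) := by
    rw [Int.fract]; push_cast; ring
  rw [fourierMode, fourierMode, h, Complex.exp_sub, Complex.exp_int_mul_two_pi_mul_I, div_one]

lemma norm_fourierMode_sub_le (n : ℕ) (x y : ℝ) :
    ‖fourierMode n x - fourierMode n y‖ ≤ 2 * π * n * |x - y| := by
  have h : fourierMode n x - fourierMode n y
      = fourierMode n y * (Complex.exp (Complex.I * ↑(2 * π * n * (x - y))) - 1) := by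
    rw [mul_sub, mul_one, fourierMode_eq_exp_mul_I, fourierMode_eq_exp_mul_I, ← Complex.exp_add]
    congr 2; push_cast; ring
  rw [h, norm_mul, norm_fourierMode, one_mul]
  refine Real.norm_exp_I_mul_ofReal_sub_one_le.trans_eq ?_
  rw [norm_eq_abs, abs_mul, abs_of_nonneg (by positivity)]

lemma exists_mem_range_abs_fract_sub_div_le {M : ℕ} (hM : 0 < M) (x : ℝ) :
    ∃ j ∈ Finset.range M, |Int.fract x - j / M| ≤ 1 / M := by
  have hM' : (0 : ℝ) < M := Nat.cast_pos.2 hM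
  set j := ⌊Int.fract x * M⌋₊
  have hj : (j : ℝ) ≤ Int.fract x * M := Nat.floor_le (by positivity)
  have hj' : Int.fract x * M < j + 1 := Nat.lt_floor_add_one _
  refine ⟨j, Finset.mem_range.2 ?_, ?_⟩
  · exact_mod_cast hj.trans_lt (mul_lt_of_lt_one_left hM' (Int.fract_lt_one x))
  · have hlow : (j : ℝ) / M ≤ Int.fract x := by rw [div_le_iff₀ hM']; exact hj
    have hupp : Int.fract x ≤ j / M + 1 / M := by
      rw [← add_div, le_div_iff₀ hM']; exact hj'.le
    rw [abs_of_nonneg (sub_nonneg.2 hlow)]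
    linarith

lemma exists_mem_range_norm_sum_mul_fourierMode_le {s : Finset ℕ} {N M : ℕ}
    (hs : ∀ n ∈ s, n ≤ N) (hM : 0 < M) (b : ℕ → ℂ) (x : ℝ) :
    ∃ j ∈ Finset.range M, ‖∑ n ∈ s, b n * fourierMode n x‖
      ≤ ‖∑ n ∈ s, b n * fourierMode n (j / M)‖ + 2 * π * N / M * ∑ n ∈ s, ‖b n‖ := by
  obtain ⟨j, hj, hdist⟩ := exists_mem_range_abs_fract_sub_div_le hM x
  refine ⟨j, hj, ?_⟩
  have hmode (n : ℕ) (hn : n ∈ s) :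
      ‖fourierMode n (Int.fract x) - fourierMode n (j / M)‖ ≤ 2 * π * N / M := by
    calc _ ≤ 2 * π * n * |Int.fract x - j / M| := norm_fourierMode_sub_le n _ _
      _ ≤ 2 * π * N * (1 / M) := by gcongr; exact_mod_cast hs n hn
      _ = 2 * π * N / M := by ring
  calc ‖∑ n ∈ s, b n * fourierMode n x‖
      = ‖∑ n ∈ s, b n * fourierMode n (j / M)
          + ∑ n ∈ s, b n * (fourierMode n (Int.fract x) - fourierMode n (j / M))‖ := by
        rw [← Finset.sum_add_distrib]
        simp_rw [fourierMode_fract, mul_sub, add_sub_cancel]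
    _ ≤ ‖∑ n ∈ s, b n * fourierMode n (j / M)‖ + ∑ n ∈ s, ‖b n‖ * (2 * π * N / M) := by
        refine (norm_add_le _ _).trans (add_le_add_right ((norm_sum_le _ _).trans ?_) _)
        refine Finset.sum_le_sum fun n hn ↦ ?_
        rw [norm_mul]
        exact mul_le_mul_of_nonneg_left (hmode n hn) (norm_nonneg _)
    _ = _ := by rw [← Finset.sum_mul, mul_comm]

lemma norm_sum_mul_fourierMode_le_add_norm_sub (s : Finset ℕ) (a b : ℕ → ℂ) (x : ℝ) :
    ‖∑ n ∈ s, a n * fourierMode n x‖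
      ≤ ‖∑ n ∈ s, b n * fourierMode n x‖ + ∑ n ∈ s, ‖a n - b n‖ := by
  have h : ∑ n ∈ s, a n * fourierMode n x
      = ∑ n ∈ s, b n * fourierMode n x + ∑ n ∈ s, (a n - b n) * fourierMode n x := by
    rw [← Finset.sum_add_distrib]; simp_rw [sub_mul, add_sub_cancel]
  rw [h]
  refine (norm_add_le _ _).trans (add_le_add_right ((norm_sum_le _ _).trans_eq ?_) _)
  simp

noncomputable def gridSmoothMax (l : ℝ) (M : ℕ) (s : Finset ℕ) (ζ₀ : ℂ) (b : ℕ → ℂ) : ℝ :=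
  smoothMaxAbs l (Finset.range M) fun j ↦ (∑ n ∈ s, b n * (ζ₀ * fourierMode n (j / M))).re

lemma norm_sum_mul_fourierMode_le_gridSmoothMax {s : Finset ℕ} {N M : ℕ}
    (hs : ∀ n ∈ s, n ≤ N) (hM : 0 < M) {l : ℝ} (hl : 0 < l) (a b : ℕ → ℂ) (x : ℝ) :
    ‖∑ n ∈ s, a n * fourierMode n x‖
      ≤ gridSmoothMax l M s 1 b + gridSmoothMax l M s (-Complex.I) b
        + 2 * π * N / M * ∑ n ∈ s, ‖b n‖ + ∑ n ∈ s, ‖a n - b n‖ := by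
  obtain ⟨j, hj, hgrid⟩ := exists_mem_range_norm_sum_mul_fourierMode_le hs hM b x
  set w := ∑ n ∈ s, b n * fourierMode n (j / M)
  have hre : |w.re| ≤ gridSmoothMax l M s 1 b := by
    simpa only [gridSmoothMax, one_mul] using
      abs_le_smoothMaxAbs hl (fun j : ℕ ↦ (∑ n ∈ s, b n * fourierMode n (j / M)).re) hj
  have him : |w.im| ≤ gridSmoothMax l M s (-Complex.I) b := by
    have h : (∑ n ∈ s, b n * (-Complex.I * fourierMode n (j / M))).re = w.im := by
      simp_rw [w, mul_left_comm _ (-Complex.I), ← Finset.mul_sum]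
      simp
    exact h ▸ abs_le_smoothMaxAbs hl
      (fun j : ℕ ↦ (∑ n ∈ s, b n * (-Complex.I * fourierMode n (j / M))).re) hj
  linarith [norm_sum_mul_fourierMode_le_add_norm_sub s a b x, Complex.norm_le_abs_re_add_abs_im w]

end FourierMode

section SalemZygmund

variable {Ω : Type*} [MeasurableSpace Ω] {P : Measure Ω} {X : ℕ → Ω → ℂ}

lemma integrable_gridSmoothMax_centeredTruncation_and_integral_le
    (hX : ∀ n, Measurable (X n)) (hindep : iIndepFun X P) (hX2 : ∀ n, MemLp (X n) 2 P)
    {l : ℝ} (hl : 0 < l) (s : Finset ℕ) {M : ℕ} (hM : 0 < M) {ζ₀ : ℂ} (hζ₀ : ‖ζ₀‖ ≤ 1) :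
    Integrable
        (fun ω ↦ gridSmoothMax l M s ζ₀ fun n ↦ centeredTruncation P (2 * l)⁻¹ (X n) ω) P ∧
      ∫ ω, gridSmoothMax l M s ζ₀ (fun n ↦ centeredTruncation P (2 * l)⁻¹ (X n) ω) ∂P
        ≤ l⁻¹ * log (2 * M) + l * ∑ n ∈ s, ∫ ω, ‖X n ω‖ ^ 2 ∂P := by
  have := hindep.isProbabilityMeasure
  have h := integrable_smoothMaxAbs_re_sum_centeredTruncation_and_integral_le hX hindep hX2 hl s
    (Finset.nonempty_range_iff.2 hM.ne') (ζ := fun j n ↦ ζ₀ * fourierMode n (j / M))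
    fun _ _ ↦ by simpa using hζ₀
  rw [Finset.card_range] at h
  exact h

lemma iSup_norm_sum_mul_fourierMode_le [IsProbabilityMeasure P] {N : ℕ} (hN : 1 ≤ N) {l : ℝ}
    (hl : 0 < l) (ω : Ω) :
    ⨆ x : ℝ, ‖∑ n ∈ Finset.Icc 1 N, X n ω * fourierMode n x‖
      ≤ gridSmoothMax l (N ^ 2) (Finset.Icc 1 N) 1
          (fun n ↦ centeredTruncation P (2 * l)⁻¹ (X n) ω)
        + gridSmoothMax l (N ^ 2) (Finset.Icc 1 N) (-Complex.I)
          (fun n ↦ centeredTruncation P (2 * l)⁻¹ (X n) ω)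
        + 2 * π / l + ∑ n ∈ Finset.Icc 1 N, ‖X n ω - centeredTruncation P (2 * l)⁻¹ (X n) ω‖ := by
  -- `N²` grid points make the discretisation error `2πN/N² · N · (1/l)` independent of `N`
  have hgrid : 2 * π * N / ↑(N ^ 2) * ∑ n ∈ Finset.Icc 1 N,
      ‖centeredTruncation P (2 * l)⁻¹ (X n) ω‖ ≤ 2 * π / l := by
    calc _ ≤ 2 * π * N / ↑(N ^ 2) * ∑ _n ∈ Finset.Icc 1 N, 2 * (2 * l)⁻¹ := by
          gcongr with n; exact norm_centeredTruncation_le (by positivity) ω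
      _ = 2 * π / l := by
          rw [Finset.sum_const, Nat.card_Icc, nsmul_eq_mul]; push_cast; field_simp
  exact ciSup_le fun x ↦ (norm_sum_mul_fourierMode_le_gridSmoothMax
    (M := N ^ 2) (fun n hn ↦ (Finset.mem_Icc.1 hn).2) (by positivity) hl (X · ω) _ x).trans
    (by gcongr)

theorem integral_iSup_norm_sum_mul_fourierMode_le (hX : ∀ n, Measurable (X n))
    (hindep : iIndepFun X P) (hX2 : ∀ n, MemLp (X n) 2 P) (hX0 : ∀ n, ∫ ω, X n ω ∂P = 0)
    {N : ℕ} (hN : 1 ≤ N) {l : ℝ} (hl : 0 < l) :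
    ∫ ω, ⨆ x : ℝ, ‖∑ n ∈ Finset.Icc 1 N, X n ω * fourierMode n x‖ ∂P
      ≤ (2 * log (2 * N ^ 2) + 2 * π) / l
        + 6 * l * ∑ n ∈ Finset.Icc 1 N, ∫ ω, ‖X n ω‖ ^ 2 ∂P := by
  have := hindep.isProbabilityMeasure
  have hM : 0 < N ^ 2 := by positivity
  obtain ⟨hint₁, hle₁⟩ := integrable_gridSmoothMax_centeredTruncation_and_integral_le
    hX hindep hX2 hl (Finset.Icc 1 N) hM (ζ₀ := 1) (by simp)
  obtain ⟨hint₂, hle₂⟩ := integrable_gridSmoothMax_centeredTruncation_and_integral_le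
    hX hindep hX2 hl (Finset.Icc 1 N) hM (ζ₀ := -Complex.I) (by simp)
  obtain ⟨hintR, hleR⟩ :=
    integrable_sum_norm_sub_centeredTruncation_and_integral_le hX hX2 hX0 hl (Finset.Icc 1 N)
  have hint := ((hint₁.fun_add hint₂).fun_add (integrable_const (2 * π / l))).fun_add hintR
  refine (integral_mono_of_nonneg (.of_forall fun ω ↦ Real.iSup_nonneg fun _ ↦ norm_nonneg _)
    hint (.of_forall (iSup_norm_sum_mul_fourierMode_le hN hl))).trans ?_
  rw [integral_add ((hint₁.fun_add hint₂).fun_add (integrable_const _)) hintR,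
    integral_add (hint₁.fun_add hint₂) (integrable_const _), integral_add hint₁ hint₂,
    integral_const, probReal_univ, one_smul]
  push_cast at hle₁ hle₂
  have hsplit : (2 * log (2 * N ^ 2) + 2 * π) / l
      = l⁻¹ * log (2 * N ^ 2) + l⁻¹ * log (2 * N ^ 2) + 2 * π / l := by ring
  rw [hsplit]
  linarith

end SalemZygmund

/-- **Salem–Zygmund for centered independent coefficients.**
There is an absolute constant `C` such that for every finite sequence
`(X_n)_{1≤n≤N}` of centered, square-integrable, complex, independent random
variables, the random polynomial `P_N(x) = ∑_{n=1}^N X_n e(nx)` satisfies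
`𝔼 ‖P_N‖_∞ ≤ C (∑ V(X_n))^{1/2} √(log N)` where `V(X_n) = 𝔼|X_n|²`. -/
theorem salem_zygmund_independent :
    ∃ C : ℝ, 0 < C ∧
      ∀ (Ω : Type) (_ : MeasurableSpace Ω) (P : Measure Ω),
        IsProbabilityMeasure P →
        ∀ X : ℕ → Ω → ℂ, (∀ n, Measurable (X n)) →
          iIndepFun X P →
          (∀ n, MemLp (X n) 2 P) →
          (∀ n, ∫ ω, X n ω ∂P = 0) →
          ∀ N : ℕ, 2 ≤ N →
            (∫ ω, (⨆ x : ℝ, ‖∑ n ∈ Finset.Icc 1 N,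
                X n ω * Complex.exp (2 * Real.pi * Complex.I * (n * x))‖) ∂P)
              ≤ C * Real.sqrt (∑ n ∈ Finset.Icc 1 N, ∫ ω, ‖X n ω‖ ^ 2 ∂P) *
                  Real.sqrt (Real.log N) := by
  refine ⟨20, by norm_num, fun Ω _ P _ X hX hindep hX2 hX0 N hN ↦ ?_⟩
  set S := ∑ n ∈ Finset.Icc 1 N, ∫ ω, ‖X n ω‖ ^ 2 ∂P
  have hS : 0 ≤ S := Finset.sum_nonneg fun n _ ↦ integral_nonneg fun ω ↦ by positivity
  have hlog : log 2 ≤ log N := log_le_log two_pos (by exact_mod_cast hN)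
  have hconst : 2 * log (2 * N ^ 2) + 2 * π ≤ 16 * log N := by
    rw [log_mul two_ne_zero (by positivity), log_pow]
    push_cast
    linarith [pi_lt_d2, log_two_gt_d9]
  have hbound : ∫ ω, ⨆ x : ℝ, ‖∑ n ∈ Finset.Icc 1 N, X n ω * fourierMode n x‖ ∂P
      ≤ 2 * √(16 * log N * (6 * S)) :=
    le_two_mul_sqrt_mul_of_forall_pos (by linarith [log_two_gt_d9]) (by positivity) fun l hl ↦
      (integral_iSup_norm_sum_mul_fourierMode_le hX hindep hX2 hX0 (by omega) hl).trans
        (add_le_add (div_le_div_of_nonneg_right hconst hl.le) (le_of_eq (by ring)))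
  calc _ ≤ 2 * √(16 * log N * (6 * S)) := hbound
    _ = 2 * √96 * √S * √(log N) := by
        rw [show 16 * log N * (6 * S) = 96 * S * log N by ring, sqrt_mul (by positivity),
          sqrt_mul (by norm_num)]
        ring
    _ ≤ 20 * √S * √(log N) := by
        have : √96 ≤ 10 := sqrt_le_iff.2 ⟨by norm_num, by norm_num⟩
        gcongr
        linarith
end

section
/- Let (δ_k)_{k≥1} be a non-increasing sequence with 0 < δ_k < 1 and ∑_k δ_k = ∞, and let (ξ_k)_{k≥1} be independent random variables with P(ξ_k = 1) = δ_k, P(ξ_k = 0) = 1 − δ_k. Let R = {k ≥ 1 : ξ_k = 1} = {u_1 < u_2 < ⋯} (almost surely infinite). Then: (1) almost surely, limsup_{n→∞} (u_{n+1} − u_n) = ∞; and (2) if moreover ∑_k δ_k² < ∞, then almost surely u_{n+1} − u_n → ∞ as n → ∞. -/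
/-!
Almost surely `R` is infinite, by the second Borel–Cantelli lemma applied to the independent
events `{ξ_k = 1}`, whose probabilities `δ_k` have divergent sum.

(1) Cut `ℕ` into consecutive blocks of length `M + 1`. The events "`R` misses the `j`-th block"
are independent and each has probability at least `(1 - δ_0)^(M + 1) > 0`, so by the second
Borel–Cantelli lemma infinitely many blocks miss `R`, and each of them lies inside a gap of
`R` longer than `M`.

(2) Since `δ` is non-increasing, the probability that `k ∈ R` and `k + j ∈ R` for some
`1 ≤ j ≤ M` is at most `M δ_k²`. This is summable, so by the first Borel–Cantelli lemma
eventually no two points of `R` are at distance at most `M`.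
-/

open Real Filter MeasureTheory ProbabilityTheory
open Function
open scoped ENNReal

namespace Nat

theorem frequently_lt_nth_succ_sub_nth {p : ℕ → Prop} (hp : {k | p k}.Infinite) {M : ℕ}
    (h : ∃ᶠ a in atTop, ∀ i ∈ Finset.Ico a (a + M), ¬ p i) :
    ∃ᶠ n in atTop, M < nth p (n + 1) - nth p n := by
  classical
  refine frequently_atTop.2 fun N => ?_
  obtain ⟨a, hNa, hempty⟩ := frequently_atTop.1 h (nth p N + 1)
  have hN : N < count p a := (lt_nth_iff_count_lt hp).2 hNa
  have hbefore : nth p (count p a - 1) < a := nth_lt_of_lt_count (by omega)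
  have hafter : a + M ≤ nth p (count p a) := by
    by_contra! hlt
    exact hempty _ (Finset.mem_Ico.2 ⟨(count_le_iff_le_nth hp).1 le_rfl, hlt⟩)
      (nth_mem_of_infinite hp _)
  refine ⟨count p a - 1, by omega, ?_⟩
  rw [Nat.sub_add_cancel (by omega)]
  omega

theorem tendsto_nth_succ_sub_nth_atTop {p : ℕ → Prop} (hp : {k | p k}.Infinite)
    (h : ∀ M, ∀ᶠ k in atTop, p k → ∀ j ∈ Finset.Icc 1 M, ¬ p (k + j)) :
    Tendsto (fun n => nth p (n + 1) - nth p n) atTop atTop := by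
  refine tendsto_atTop.2 fun M => ((nth_strictMono hp).tendsto_atTop.eventually (h M)).mono
    fun n hn => ?_
  have hlt : nth p n < nth p (n + 1) := nth_strictMono hp n.lt_succ_self
  by_contra! hgap
  refine hn (nth_mem_of_infinite hp n) (nth p (n + 1) - nth p n)
    (Finset.mem_Icc.2 ⟨by omega, hgap.le⟩) ?_
  rw [Nat.add_sub_cancel' hlt.le]
  exact nth_mem_of_infinite hp _

theorem pairwise_disjoint_Ico_mul_add (L : ℕ) :
    Pairwise (Disjoint on fun j : ℕ => Finset.Ico (j * L) (j * L + L)) := by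
  intro j j' hne
  simp only [onFun, ← Finset.disjoint_coe, Finset.coe_Ico, ← Nat.succ_mul]
  exact Monotone.pairwise_disjoint_on_Ico_succ (fun _ _ h => Nat.mul_le_mul_right L h) hne

end Nat

theorem ENNReal.tsum_ofReal_eq_top_of_not_summable {f : ℕ → ℝ} (hf : ∀ i, 0 ≤ f i)
    (h : ¬ Summable f) : ∑' i, ENNReal.ofReal (f i) = ⊤ := by
  by_contra hne
  exact h ((ENNReal.summable_toReal hne).congr fun i => ENNReal.toReal_ofReal (hf i))

namespace ProbabilityTheory

variable {Ω ι β : Type*} [MeasurableSpace Ω] [MeasurableSpace β] {P : Measure Ω}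

theorem prob_preimage_zero_eq_one_sub [IsProbabilityMeasure P] {X : Ω → ℕ} (hX : Measurable X)
    (hval : ∀ ω, X ω = 0 ∨ X ω = 1) : P (X ⁻¹' {0}) = 1 - P (X ⁻¹' {1}) := by
  have hcompl : X ⁻¹' {0} = (X ⁻¹' {1})ᶜ := by
    ext ω
    have := hval ω
    simp only [Set.mem_preimage, Set.mem_singleton_iff, Set.mem_compl_iff]
    omega
  rw [hcompl, prob_compl_eq_one_sub (hX (measurableSet_singleton 1))]

theorem ae_frequently_mem_of_iIndepSet {s : ℕ → Set Ω} (hsm : ∀ n, MeasurableSet (s n))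
    (hs : iIndepSet s P) (hs' : ∑' n, P (s n) = ⊤) :
    ∀ᵐ ω ∂P, ∃ᶠ n in atTop, ω ∈ s n := by
  have := hs.isProbabilityMeasure
  have hlimsup : ∀ᵐ ω ∂P, ω ∈ limsup s atTop :=
    (mem_ae_iff_prob_eq_one (MeasurableSet.measurableSet_limsup hsm)).2
      (measure_limsup_eq_one hsm hs hs')
  filter_upwards [hlimsup] with ω hω
  exact mem_limsup_iff_frequently_mem.1 hω

theorem iIndepFun.iIndepSet_biInter_preimage {κ : Type*} {ξ : ι → Ω → β}
    (hmeas : ∀ i, Measurable (ξ i)) (hξ : iIndepFun ξ P) {B : κ → Finset ι}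
    (hB : Pairwise (Disjoint on B)) {S : Set β} (hS : MeasurableSet S) :
    iIndepSet (fun j => ⋂ i ∈ B j, ξ i ⁻¹' S) P := by
  classical
  refine (iIndepSet_iff_meas_biInter
    fun j => Finset.measurableSet_biInter _ fun i _ => hmeas i hS).2 fun J => ?_
  rw [← Finset.set_biInter_biUnion, hξ.measure_inter_preimage_eq_mul _ fun _ _ => hS,
    Finset.prod_biUnion fun j _ j' _ hne => hB hne]
  exact Finset.prod_congr rfl fun j _ =>
    (hξ.measure_inter_preimage_eq_mul (B j) fun _ _ => hS).symm

theorem iIndepFun.ae_frequently_mem_preimage {ξ : ℕ → Ω → β}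
    (hmeas : ∀ i, Measurable (ξ i)) (hξ : iIndepFun ξ P) {S : Set β} (hS : MeasurableSet S)
    (hsum : ∑' i, P (ξ i ⁻¹' S) = ⊤) :
    ∀ᵐ ω ∂P, ∃ᶠ i in atTop, ξ i ω ∈ S := by
  have hind : iIndepSet (fun i => ξ i ⁻¹' S) P := by
    simpa using hξ.iIndepSet_biInter_preimage hmeas
      (B := fun i => {i}) (fun _ _ h => Finset.disjoint_singleton.2 h) hS
  exact ae_frequently_mem_of_iIndepSet (fun i => hmeas i hS) hind hsum

theorem iIndepFun.ae_frequently_forall_mem {ξ : ι → Ω → β}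
    (hmeas : ∀ i, Measurable (ξ i)) (hξ : iIndepFun ξ P) {B : ℕ → Finset ι}
    (hB : Pairwise (Disjoint on B)) {L : ℕ} (hcard : ∀ j, (B j).card = L)
    {S : Set β} (hS : MeasurableSet S) {c : ℝ≥0∞} (hc : c ≠ 0)
    (hle : ∀ i, c ≤ P (ξ i ⁻¹' S)) :
    ∀ᵐ ω ∂P, ∃ᶠ j in atTop, ∀ i ∈ B j, ξ i ω ∈ S := by
  have hblock : ∀ j, c ^ L ≤ P (⋂ i ∈ B j, ξ i ⁻¹' S) := fun j => by
    rw [hξ.measure_inter_preimage_eq_mul (B j) fun _ _ => hS, ← hcard j, ← Finset.prod_const]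
    exact Finset.prod_le_prod' fun i _ => hle i
  have hsum : ∑' j, P (⋂ i ∈ B j, ξ i ⁻¹' S) = ⊤ :=
    top_unique <| (ENNReal.tsum_const_eq_top_of_ne_zero (pow_ne_zero L hc)).symm.le.trans
      (ENNReal.tsum_le_tsum hblock)
  filter_upwards [ae_frequently_mem_of_iIndepSet
    (fun j => Finset.measurableSet_biInter _ fun i _ => hmeas i hS)
    (hξ.iIndepSet_biInter_preimage hmeas hB hS) hsum] with ω hω
  exact hω.mono fun j hj i hi => Set.mem_iInter₂.1 hj i hi

theorem iIndepFun.ae_eventually_forall_notMem_add {ξ : ℕ → Ω → β} (hξ : iIndepFun ξ P)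
    {S : Set β} (hS : MeasurableSet S) (hanti : Antitone fun i => P (ξ i ⁻¹' S))
    (hsum : ∑' i, P (ξ i ⁻¹' S) ^ 2 ≠ ⊤) (M : ℕ) :
    ∀ᵐ ω ∂P, ∀ᶠ k in atTop, ξ k ω ∈ S → ∀ j ∈ Finset.Icc 1 M, ξ (k + j) ω ∉ S := by
  set F : ℕ → Set Ω := fun k => ⋃ j ∈ Finset.Icc 1 M, ξ k ⁻¹' S ∩ ξ (k + j) ⁻¹' S
  have hpair : ∀ k, ∀ j ∈ Finset.Icc 1 M,
      P (ξ k ⁻¹' S ∩ ξ (k + j) ⁻¹' S) ≤ P (ξ k ⁻¹' S) ^ 2 := fun k j hj => by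
    rw [(hξ.indepFun (by grind : k ≠ k + j)).measure_inter_preimage_eq_mul _ _ hS hS, sq]
    exact mul_le_mul_right (hanti (Nat.le_add_right k j)) _
  have hF : ∀ k, P (F k) ≤ M * P (ξ k ⁻¹' S) ^ 2 := fun k =>
    calc P (F k) ≤ ∑ j ∈ Finset.Icc 1 M, P (ξ k ⁻¹' S ∩ ξ (k + j) ⁻¹' S) :=
          measure_biUnion_finset_le _ _
      _ ≤ ∑ j ∈ Finset.Icc 1 M, P (ξ k ⁻¹' S) ^ 2 := Finset.sum_le_sum (hpair k)
      _ = M * P (ξ k ⁻¹' S) ^ 2 := by simp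
  have hFsum : ∑' k, P (F k) ≠ ⊤ :=
    ne_top_of_le_ne_top
      (by rw [ENNReal.tsum_mul_left]; exact ENNReal.mul_ne_top (ENNReal.natCast_ne_top M) hsum)
      (ENNReal.tsum_le_tsum hF)
  filter_upwards [ae_eventually_notMem hFsum] with ω hω
  exact hω.mono fun k hk hkS j hj hjS => hk (Set.mem_biUnion hj ⟨hkS, hjS⟩)

end ProbabilityTheory

/-- **Gaps of a random set of integers.**
Let `(δ_k)` be non-increasing with `0 < δ_k < 1` and `∑ δ_k = ∞`, and let `(ξ_k)`
be independent with `P(ξ_k = 1) = δ_k`, `P(ξ_k = 0) = 1 − δ_k`.  Let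
`R(ω) = {k : ξ_k(ω) = 1} = {u_0 < u_1 < ⋯}` (a.s. infinite), enumerated by `Nat.nth`.
Then (1) almost surely `limsup (u_{n+1} − u_n) = ∞`; and (2) if moreover
`∑ δ_k² < ∞`, then almost surely `u_{n+1} − u_n → ∞`. -/
theorem random_set_gaps {Ω : Type*} [MeasurableSpace Ω]
    (P : Measure Ω) [IsProbabilityMeasure P]
    (δ : ℕ → ℝ) (hmono : Antitone δ) (hδ : ∀ k, 0 < δ k ∧ δ k < 1)
    (hdiv : ¬ Summable δ)
    (ξ : ℕ → Ω → ℕ) (hmeas : ∀ k, Measurable (ξ k))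
    (hindep : iIndepFun ξ P)
    (hval : ∀ k ω, ξ k ω = 0 ∨ ξ k ω = 1)
    (hlaw : ∀ k, P {ω | ξ k ω = 1} = ENNReal.ofReal (δ k)) :
    (∀ᵐ ω ∂P, ∀ M : ℕ, ∀ N : ℕ, ∃ n : ℕ, N ≤ n ∧
        M ≤ Nat.nth (fun k => ξ k ω = 1) (n + 1) - Nat.nth (fun k => ξ k ω = 1) n) ∧
    (Summable (fun k => δ k ^ 2) →
      ∀ᵐ ω ∂P, Tendsto
        (fun n : ℕ => Nat.nth (fun k => ξ k ω = 1) (n + 1) - Nat.nth (fun k => ξ k ω = 1) n)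
        atTop atTop) := by
  have hone : ∀ k, P (ξ k ⁻¹' {1}) = ENNReal.ofReal (δ k) := hlaw
  have hzero : ∀ k, 1 - ENNReal.ofReal (δ 0) ≤ P (ξ k ⁻¹' {0}) := fun k => by
    rw [prob_preimage_zero_eq_one_sub (hmeas k) (hval k), hone]
    exact tsub_le_tsub_left (ENNReal.ofReal_le_ofReal (hmono (Nat.zero_le k))) 1
  have hinf : ∀ᵐ ω ∂P, {k | ξ k ω = 1}.Infinite := by
    filter_upwards [hindep.ae_frequently_mem_preimage hmeas (measurableSet_singleton 1)
      (by simpa only [hone] using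
        ENNReal.tsum_ofReal_eq_top_of_not_summable (fun k => (hδ k).1.le) hdiv)] with ω hω
    exact Nat.frequently_atTop_iff_infinite.1 hω
  refine ⟨?_, fun hsq => ?_⟩
  · have hwin := ae_all_iff.2 fun M : ℕ => hindep.ae_frequently_forall_mem hmeas
      (Nat.pairwise_disjoint_Ico_mul_add (M + 1)) (L := M + 1) (fun j => by simp)
      (measurableSet_singleton 0) (tsub_pos_of_lt (ENNReal.ofReal_lt_one.2 (hδ 0).2)).ne'
      hzero
    filter_upwards [hinf, hwin] with ω hω hωwin M
    have hempty : ∃ᶠ a in atTop, ∀ i ∈ Finset.Ico a (a + (M + 1)), ¬ ξ i ω = 1 :=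
      (tendsto_atTop_mono (fun j => Nat.le_mul_of_pos_right j M.succ_pos) tendsto_id).frequently
        ((hωwin M).mono fun j hj i hi => by simp [Set.mem_singleton_iff.1 (hj i hi)])
    exact fun N => (frequently_atTop.1 (Nat.frequently_lt_nth_succ_sub_nth hω hempty) N).imp
      fun n hn => ⟨hn.1, by omega⟩
  · have hpair := ae_all_iff.2 (hindep.ae_eventually_forall_notMem_add
      (measurableSet_singleton 1)
      (by simp only [hone]; exact ENNReal.ofReal_mono.comp_antitone hmono)
      (by simpa only [hone, ← ENNReal.ofReal_pow (hδ _).1.le] using hsq.tsum_ofReal_ne_top))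
    filter_upwards [hinf, hpair] with ω hω hωpair
    exact Nat.tendsto_nth_succ_sub_nth_atTop hω hωpair
end
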